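/- arXiv:2407.07904 — 8 statements merged into one kernel-verified Lean document; each statement's English description precedes it below -/
import Mathlib

section
/- For all positive parameters r, K, a, γ, β, N and delay τ > 0, and for every continuous initial condition φ = (φ₁, φ₂) : [−τ, 0] → ℝ² with φ₁(θ) ≥ 0 and φ₂(θ) ≥ 0 for all θ ∈ [−τ, 0], the delayed predator–prey system x'(t) = r(1 − x(t)/K)x(t) − γ x(t)² y(t)/(a² + x(t)²), y'(t) = −β y(t) + (γ x(t−τ)²/(a² + x(t−τ)²)) y(t−τ) e^{−y(t−τ)/N} has a unique solution (x, y) defined on all of [−τ, +∞), and this solution satisfies x(t) ≥ 0 and y(t) ≥ 0 for all t ≥ 0. -/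
/-!
Method of steps. Once a solution is known on `[-τ, T]`, the delayed arguments `x (t - τ)`,
`y (t - τ)` are known for `t ∈ [T, T + τ]`. The predator equation there is linear in `y` with a
nonnegative forcing term, solved by variation of constants; the prey equation becomes the scalar
ODE `x' = F(x, y(t))`. Its field is locally Lipschitz and points into `[0, max K (x T)]` at both
ends, since `F(0, w) = 0` and `F(u, w) ≤ 0` for `u ≥ K`, `w ≥ 0`; so Picard–Lindelöf applied to
the field frozen outside that interval gives a solution that never leaves it. Uniqueness also
goes step by step: two solutions agreeing up to time `s` have the same delayed terms up to
`s + τ`, and Gronwall's inequality applies. Only these structural properties of the two rates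
enter, so everything holds for `x' = F(x, y)`, `y' = -β y + G(x(t - τ), y(t - τ))` with `F`
locally Lipschitz and `G` continuous and nonnegative on the nonnegative quadrant.
-/

open Set Filter

/-- `(x, y)` is a solution on `[-τ, ∞)` of the delayed predator–prey system
`x'(t) = r(1 − x(t)/K)x(t) − γ x(t)² y(t)/(a² + x(t)²)`,
`y'(t) = −β y(t) + (γ x(t−τ)²/(a² + x(t−τ)²)) y(t−τ) e^{−y(t−τ)/N}`,
with initial condition `(φ₁, φ₂)` on `[-τ, 0]`. -/
def IsSolution (r K a γ β N τ : ℝ) (φ₁ φ₂ : ℝ → ℝ) (x y : ℝ → ℝ) : Prop :=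
  ContinuousOn x (Ici (-τ)) ∧ ContinuousOn y (Ici (-τ)) ∧
  (∀ θ ∈ Icc (-τ) 0, x θ = φ₁ θ ∧ y θ = φ₂ θ) ∧
  (∀ t > (0 : ℝ),
    HasDerivAt x (r * (1 - x t / K) * x t - γ * (x t) ^ 2 * y t / (a ^ 2 + (x t) ^ 2)) t ∧
    HasDerivAt y (-β * y t + γ * (x (t - τ)) ^ 2 / (a ^ 2 + (x (t - τ)) ^ 2) * y (t - τ) *
      Real.exp (-(y (t - τ)) / N)) t)


open Topology Function
open scoped NNReal

theorem image_le_of_deriv_right_nonpos_of_le {f f' : ℝ → ℝ} {a b B : ℝ}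
    (hf : ContinuousOn f (Icc a b)) (hf' : ∀ x ∈ Ico a b, HasDerivWithinAt f (f' x) (Ici x) x)
    (ha : f a ≤ B) (bound : ∀ x ∈ Ico a b, B ≤ f x → f' x ≤ 0) :
    ∀ ⦃x⦄, x ∈ Icc a b → f x ≤ B := by
  intro x hx
  -- compare with the strict barriers `B + r (t - a)`, `r > 0`, then let `r → 0`
  have hr : ∀ r ∈ Ioi (0 : ℝ), f x ≤ B + r * (x - a) := fun r hr => by
    refine image_le_of_deriv_right_lt_deriv_boundary hf hf' (by simpa using ha)
      (fun t => ((hasDerivAt_id' t).sub_const a).const_mul r |>.const_add B)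
      (fun t ht hft => ?_) hx
    have : B ≤ f t := by rw [hft]; nlinarith [mem_Ioi.1 hr, ht.1]
    simpa using (bound t ht this).trans_lt hr
  have : ContinuousWithinAt (fun r => B + r * (x - a)) (Ioi 0) 0 := by fun_prop
  simpa using continuousWithinAt_const.closure_le (by simp) this hr

theorem mem_Icc_of_deriv_right {f f' : ℝ → ℝ} {a b A B : ℝ}
    (hf : ContinuousOn f (Icc a b)) (hf' : ∀ x ∈ Ico a b, HasDerivWithinAt f (f' x) (Ici x) x)
    (ha : f a ∈ Icc A B) (hA : ∀ x ∈ Ico a b, f x ≤ A → 0 ≤ f' x)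
    (hB : ∀ x ∈ Ico a b, B ≤ f x → f' x ≤ 0) : ∀ ⦃x⦄, x ∈ Icc a b → f x ∈ Icc A B := by
  have hle := image_le_of_deriv_right_nonpos_of_le hf hf' ha.2 hB
  have hge := image_le_of_deriv_right_nonpos_of_le (B := -A) hf.neg (fun x hx => (hf' x hx).neg)
    (neg_le_neg ha.1) fun x hx hfx => neg_nonpos.2 (hA x hx (neg_le_neg_iff.1 hfx))
  exact fun x hx => ⟨neg_le_neg_iff.1 (hge hx), hle hx⟩

theorem ContinuousOn.exists_continuous_eqOn_Icc {g : ℝ → ℝ} {a b : ℝ} (hab : a ≤ b)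
    (hg : ContinuousOn g (Icc a b)) : ∃ g' : ℝ → ℝ, Continuous g' ∧ EqOn g' g (Icc a b) :=
  ⟨IccExtend hab ((Icc a b).domRestrict g),
    (continuousOn_iff_continuous_domRestrict.1 hg).Icc_extend',
    fun _ ht => IccExtend_of_mem hab _ ht⟩

theorem hasDerivWithinAt_Ici_of_hasDerivAt_Ioo {f f' : ℝ → ℝ} {a b : ℝ} (hab : a < b)
    (hf : ContinuousOn f (Icc a b)) (hf' : ContinuousOn f' (Icc a b))
    (hd : ∀ t ∈ Ioo a b, HasDerivAt f (f' t) t) : HasDerivWithinAt f (f' a) (Ici a) a := by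
  have hmem : Ioo a b ∈ 𝓝[>] a := Ioo_mem_nhdsGT hab
  refine hasDerivWithinAt_Ici_of_tendsto_deriv
    (fun t ht => (hd t ht).differentiableAt.differentiableWithinAt)
    ((hf a (left_mem_Icc.2 hab.le)).mono Ioo_subset_Icc_self) hmem ?_
  have hlim : Tendsto f' (𝓝[>] a) (𝓝 (f' a)) :=
    (hf' a (left_mem_Icc.2 hab.le)).tendsto.mono_left
      (nhdsWithin_le_of_mem (mem_of_superset hmem Ioo_subset_Icc_self))
  exact hlim.congr' (eventually_of_mem hmem fun t ht => (hd t ht).deriv.symm)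

theorem exists_forall_hasDerivAt_linear_nonneg {g : ℝ → ℝ} (hg : Continuous g) (β : ℝ)
    {T T' y₀ : ℝ} (hy₀ : 0 ≤ y₀) (hg₀ : ∀ t ∈ Icc T T', 0 ≤ g t) :
    ∃ y : ℝ → ℝ, y T = y₀ ∧ (∀ t, HasDerivAt y (-β * y t + g t) t) ∧
      ∀ t ∈ Icc T T', 0 ≤ y t := by
  -- variation of constants
  set I : ℝ → ℝ := fun t => ∫ s in T..t, Real.exp (β * s) * g s
  have hI : ∀ t, HasDerivAt I (Real.exp (β * t) * g t) t := fun t =>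
    ((continuous_const.mul continuous_id).rexp.mul hg).integral_hasStrictDerivAt T t |>.hasDerivAt
  refine ⟨fun t => Real.exp (-(β * t)) * (Real.exp (β * T) * y₀ + I t), ?_, fun t => ?_,
    fun t ht => ?_⟩
  · simp [I, ← mul_assoc, ← Real.exp_add]
  · have hexp : HasDerivAt (fun s => Real.exp (-(β * s))) (Real.exp (-(β * t)) * -β) t := by
      simpa using ((hasDerivAt_id' t).const_mul β).fun_neg.exp
    refine (hexp.mul ((hI t).const_add (Real.exp (β * T) * y₀))).congr_deriv ?_
    have : Real.exp (-(β * t)) * Real.exp (β * t) = 1 := by rw [← Real.exp_add]; simp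
    linear_combination g t * this
  · refine mul_nonneg (Real.exp_pos _).le (add_nonneg (by positivity) ?_)
    exact intervalIntegral.integral_nonneg ht.1 fun s hs =>
      mul_nonneg (Real.exp_pos _).le (hg₀ s ⟨hs.1, hs.2.trans ht.2⟩)

theorem LocallyLipschitz.exists_lipschitzOnWith_prod {F : ℝ → ℝ → ℝ}
    (hF : LocallyLipschitz (uncurry F)) {s t : Set ℝ} (hs : IsCompact s) (ht : IsCompact t) :
    ∃ L, ∀ w ∈ t, LipschitzOnWith L (F · w) s := by
  obtain ⟨L, hL⟩ := hF.locallyLipschitzOn.exists_lipschitzOnWith_of_compact (hs.prod ht)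
  refine ⟨L, fun w hw => ?_⟩
  have := hL.comp (LipschitzWith.prodMk_right w).lipschitzOnWith fun u hu => mk_mem_prod hu hw
  rwa [mul_one] at this

theorem exists_forall_hasDerivWithinAt_mem_Icc {v : ℝ → ℝ → ℝ} {t₀ t₁ A B x₀ : ℝ} {L : ℝ≥0}
    (ht : t₀ ≤ t₁) (hx₀ : x₀ ∈ Icc A B)
    (hlip : ∀ t ∈ Icc t₀ t₁, LipschitzOnWith L (v t) (Icc A B))
    (hcont : ∀ u ∈ Icc A B, ContinuousOn (v · u) (Icc t₀ t₁))
    (hA : ∀ t ∈ Icc t₀ t₁, 0 ≤ v t A) (hB : ∀ t ∈ Icc t₀ t₁, v t B ≤ 0) :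
    ∃ f : ℝ → ℝ, f t₀ = x₀ ∧
      ∀ t ∈ Icc t₀ t₁, HasDerivWithinAt f (v t (f t)) (Icc t₀ t₁) t ∧ f t ∈ Icc A B := by
  have hAB : A ≤ B := hx₀.1.trans hx₀.2
  -- Picard–Lindelöf for the field frozen outside `[A, B]`, which is globally Lipschitz and bounded
  obtain ⟨c, hc, hcL, hcA, hcB, hcid⟩ : ∃ c : ℝ → ℝ, (∀ u, c u ∈ Icc A B) ∧ LipschitzWith 1 c ∧
      (∀ u ≤ A, c u = A) ∧ (∀ u, B ≤ u → c u = B) ∧ ∀ u ∈ Icc A B, c u = u :=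
    ⟨fun u => projIcc A B hAB u, fun u => (projIcc A B hAB u).2,
      by have := (LipschitzWith.subtype_val _).comp (LipschitzWith.projIcc hAB)
         rwa [mul_one] at this,
      fun _ hu => by simp [projIcc_of_le_left hAB hu],
      fun _ hu => by simp [projIcc_of_right_le hAB hu], fun _ hu => by simp [projIcc_of_mem hAB hu]⟩
  obtain ⟨M, hM⟩ := isCompact_Icc.exists_bound_of_continuousOn (hcont A (left_mem_Icc.2 hAB))
  have hC : ∀ t ∈ Icc t₀ t₁, ∀ u, ‖v t (c u)‖ ≤ M + L * (B - A) := fun t ht u => by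
    have h1 := (hlip t ht).dist_le_mul _ (hc u) _ (left_mem_Icc.2 hAB)
    have h2 : dist (c u) A ≤ B - A := by
      rw [Real.dist_eq, abs_of_nonneg (sub_nonneg.2 (hc u).1)]; linarith [(hc u).2]
    calc ‖v t (c u)‖ ≤ ‖v t A‖ + dist (v t (c u)) (v t A) := by
          rw [dist_eq_norm]; exact norm_le_norm_add_norm_sub' _ _
      _ ≤ M + L * (B - A) := add_le_add (hM t ht) (h1.trans (by gcongr))
  have hpl : IsPicardLindelof (fun t u => v t (c u)) (⟨t₀, left_mem_Icc.2 ht⟩ : Icc t₀ t₁) x₀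
      ((M + L * (B - A)) * (t₁ - t₀)).toNNReal 0 (M + L * (B - A)).toNNReal L := by
    have hC0 : 0 ≤ M + L * (B - A) := (norm_nonneg _).trans (hC t₀ (left_mem_Icc.2 ht) x₀)
    refine ⟨fun t ht => ?_, fun u _ => hcont (c u) (hc u),
      fun t ht u _ => (hC t ht u).trans (Real.le_coe_toNNReal _), ?_⟩
    · have := (hlip t ht).comp (hcL.lipschitzOnWith (s := univ)) fun u _ => hc u
      rw [mul_one] at this
      exact this.mono (subset_univ _)
    · simp [Real.coe_toNNReal _ hC0, Real.coe_toNNReal _ (mul_nonneg hC0 (sub_nonneg.2 ht)), ht]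
  obtain ⟨f, hf₀, hf⟩ := hpl.exists_eq_forall_mem_Icc_hasDerivWithinAt₀
  have hmem := mem_Icc_of_deriv_right (fun t ht => (hf t ht).continuousWithinAt)
    (fun t ht => (hf t (Ico_subset_Icc_self ht)).mono_of_mem_nhdsWithin
      (Icc_mem_nhdsGE_of_mem ht)) (hf₀ ▸ hx₀)
    (fun t ht hft => by simpa [hcA _ hft] using hA t (Ico_subset_Icc_self ht))
    (fun t ht hft => by simpa [hcB _ hft] using hB t (Ico_subset_Icc_self ht))
  exact ⟨f, hf₀, fun t ht => ⟨hcid _ (hmem ht) ▸ hf t ht, hmem ht⟩⟩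

theorem ite_le_eq_right {u v : ℝ → ℝ} {T t : ℝ} (huv : u T = v T) (ht : T ≤ t) :
    (if t ≤ T then u t else v t) = v t := by
  split_ifs with h
  · rw [le_antisymm h ht, huv]
  · rfl

theorem ContinuousOn.ite_le_Icc {u v : ℝ → ℝ} {a T b : ℝ} (huv : u T = v T)
    (hu : ContinuousOn u (Icc a T)) (hv : ContinuousOn v (Icc T b)) (ha : a ≤ T) (hb : T ≤ b) :
    ContinuousOn (fun t => if t ≤ T then u t else v t) (Icc a b) := by
  rw [← Icc_union_Icc_eq_Icc ha hb]
  exact (hu.congr fun t ht => if_pos ht.2).union_of_isClosed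
    (hv.congr fun t ht => ite_le_eq_right huv ht.1) isClosed_Icc isClosed_Icc

theorem HasDerivWithinAt.ite_le_Icc {u v : ℝ → ℝ} {a T b t d : ℝ} (huv : u T = v T)
    (hu : t ≤ T → HasDerivWithinAt u d (Icc a T) t) (hv : T ≤ t → HasDerivWithinAt v d (Icc T b) t)
    (ha : a ≤ T) (hb : T ≤ b) :
    HasDerivWithinAt (fun t => if t ≤ T then u t else v t) d (Icc a b) t := by
  rw [← Icc_union_Icc_eq_Icc ha hb]
  refine .union ?_ ?_
  · by_cases htT : t ≤ T
    · exact (hu htT).congr (fun s hs => if_pos hs.2) (if_pos htT)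
    · exact HasFDerivWithinAt.of_notMem_closure <| by
        rw [closure_Icc]; exact fun h => htT h.2
  · by_cases hTt : T ≤ t
    · exact (hv hTt).congr (fun s hs => ite_le_eq_right huv hs.1) (ite_le_eq_right huv hTt)
    · exact HasFDerivWithinAt.of_notMem_closure <| by
        rw [closure_Icc]; exact fun h => hTt h.1

structure IsDelaySolutionOn (F G : ℝ → ℝ → ℝ) (β τ : ℝ) (φ₁ φ₂ : ℝ → ℝ) (T : ℝ)
    (x y : ℝ → ℝ) : Prop where
  continuousOn_x : ContinuousOn x (Icc (-τ) T)
  continuousOn_y : ContinuousOn y (Icc (-τ) T)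
  history : ∀ θ ∈ Icc (-τ) 0, x θ = φ₁ θ ∧ y θ = φ₂ θ
  hasDerivWithinAt_x : ∀ t ∈ Ioc 0 T, HasDerivWithinAt x (F (x t) (y t)) (Icc (-τ) T) t
  hasDerivWithinAt_y : ∀ t ∈ Ioc 0 T,
    HasDerivWithinAt y (-β * y t + G (x (t - τ)) (y (t - τ))) (Icc (-τ) T) t

def IsDelaySolution (F G : ℝ → ℝ → ℝ) (β τ : ℝ) (φ₁ φ₂ : ℝ → ℝ) (x y : ℝ → ℝ) : Prop :=
  ContinuousOn x (Ici (-τ)) ∧ ContinuousOn y (Ici (-τ)) ∧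
  (∀ θ ∈ Icc (-τ) 0, x θ = φ₁ θ ∧ y θ = φ₂ θ) ∧
  ∀ t > (0 : ℝ), HasDerivAt x (F (x t) (y t)) t ∧
    HasDerivAt y (-β * y t + G (x (t - τ)) (y (t - τ))) t

namespace IsDelaySolutionOn

variable {F G : ℝ → ℝ → ℝ} {β τ T K : ℝ} {φ₁ φ₂ x y x' y' : ℝ → ℝ}

theorem mono (h : IsDelaySolutionOn F G β τ φ₁ φ₂ T x y) {T' : ℝ} (hT' : T' ≤ T) :
    IsDelaySolutionOn F G β τ φ₁ φ₂ T' x y where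
  continuousOn_x := h.continuousOn_x.mono (Icc_subset_Icc_right hT')
  continuousOn_y := h.continuousOn_y.mono (Icc_subset_Icc_right hT')
  history := h.history
  hasDerivWithinAt_x t ht :=
    (h.hasDerivWithinAt_x t ⟨ht.1, ht.2.trans hT'⟩).mono (Icc_subset_Icc_right hT')
  hasDerivWithinAt_y t ht :=
    (h.hasDerivWithinAt_y t ⟨ht.1, ht.2.trans hT'⟩).mono (Icc_subset_Icc_right hT')

theorem congr (h : IsDelaySolutionOn F G β τ φ₁ φ₂ T x y) (hτ : 0 ≤ τ) (hT : 0 ≤ T)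
    (hx : EqOn x' x (Icc (-τ) T)) (hy : EqOn y' y (Icc (-τ) T)) :
    IsDelaySolutionOn F G β τ φ₁ φ₂ T x' y' where
  continuousOn_x := h.continuousOn_x.congr hx
  continuousOn_y := h.continuousOn_y.congr hy
  history θ hθ := by
    have hθ' : θ ∈ Icc (-τ) T := ⟨hθ.1, hθ.2.trans hT⟩
    rw [hx hθ', hy hθ']
    exact h.history θ hθ
  hasDerivWithinAt_x t ht := by
    have ht' : t ∈ Icc (-τ) T := ⟨by linarith [ht.1], ht.2⟩
    rw [hx ht', hy ht']
    exact (h.hasDerivWithinAt_x t ht).congr hx (hx ht')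
  hasDerivWithinAt_y t ht := by
    have ht' : t ∈ Icc (-τ) T := ⟨by linarith [ht.1], ht.2⟩
    have hlag : t - τ ∈ Icc (-τ) T := ⟨by linarith [ht.1], by linarith [ht.2]⟩
    rw [hx hlag, hy hlag, hy ht']
    exact (h.hasDerivWithinAt_y t ht).congr hy (hy ht')

theorem continuousOn_delay (h : IsDelaySolutionOn F G β τ φ₁ φ₂ T x y)
    (hG : Continuous (uncurry G)) :
    ContinuousOn (fun t => G (x (t - τ)) (y (t - τ))) (Icc 0 (T + τ)) := by
  have hlag : MapsTo (· - τ) (Icc 0 (T + τ)) (Icc (-τ) T) := fun t ht =>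
    ⟨by linarith [ht.1], by linarith [ht.2]⟩
  exact hG.comp_continuousOn
    ((h.continuousOn_x.comp (continuousOn_id.sub continuousOn_const) hlag).prodMk
      (h.continuousOn_y.comp (continuousOn_id.sub continuousOn_const) hlag))

theorem hasDerivWithinAt_Ici (h : IsDelaySolutionOn F G β τ φ₁ φ₂ T x y) (hτ : 0 ≤ τ)
    (hF : Continuous (uncurry F)) (hG : Continuous (uncurry G)) {t : ℝ} (ht : t ∈ Ico 0 T) :
    HasDerivWithinAt x (F (x t) (y t)) (Ici t) t ∧
      HasDerivWithinAt y (-β * y t + G (x (t - τ)) (y (t - τ))) (Ici t) t := by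
  rcases ht.1.eq_or_lt with rfl | ht0
  · -- no derivative is prescribed at `0`: obtain it as the limit of the derivative
    have hsub : Icc 0 T ⊆ Icc (-τ) T := Icc_subset_Icc_left (by linarith)
    have hint : ∀ s ∈ Ioo 0 T, Icc (-τ) T ∈ 𝓝 s := fun s hs =>
      Icc_mem_nhds (by linarith [hs.1]) hs.2
    have hx := h.continuousOn_x.mono hsub
    have hy := h.continuousOn_y.mono hsub
    refine ⟨hasDerivWithinAt_Ici_of_hasDerivAt_Ioo ht.2 hx (hF.comp_continuousOn (hx.prodMk hy))
      fun s hs => (h.hasDerivWithinAt_x s (Ioo_subset_Ioc_self hs)).hasDerivAt (hint s hs),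
      hasDerivWithinAt_Ici_of_hasDerivAt_Ioo ht.2 hy (continuousOn_const.mul hy |>.add
        ((h.continuousOn_delay hG).mono (Icc_subset_Icc_right (by linarith))))
      fun s hs => (h.hasDerivWithinAt_y s (Ioo_subset_Ioc_self hs)).hasDerivAt (hint s hs)⟩
  · have hmem : Icc (-τ) T ∈ 𝓝[≥] t := Icc_mem_nhdsGE_of_mem ⟨by linarith, ht.2⟩
    exact ⟨(h.hasDerivWithinAt_x t ⟨ht0, ht.2.le⟩).mono_of_mem_nhdsWithin hmem,
      (h.hasDerivWithinAt_y t ⟨ht0, ht.2.le⟩).mono_of_mem_nhdsWithin hmem⟩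

theorem eqOn_of_eqOn (h : IsDelaySolutionOn F G β τ φ₁ φ₂ T x y)
    (h' : IsDelaySolutionOn F G β τ φ₁ φ₂ T x' y') (hτ : 0 ≤ τ)
    (hF : LocallyLipschitz (uncurry F)) (hG : Continuous (uncurry G)) {s s' : ℝ} (hs : 0 ≤ s)
    (hss' : s ≤ s') (hs'T : s' ≤ T) (hs'τ : s' ≤ s + τ)
    (hx : EqOn x x' (Icc (-τ) s)) (hy : EqOn y y' (Icc (-τ) s)) :
    EqOn x x' (Icc (-τ) s') ∧ EqOn y y' (Icc (-τ) s') := by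
  have hI : Icc s s' ⊆ Icc (-τ) T := Icc_subset_Icc (by linarith) hs'T
  have hIco : ∀ t ∈ Ico s s', t ∈ Ico 0 T := fun t ht => ⟨hs.trans ht.1, ht.2.trans_le hs'T⟩
  have hlag : ∀ t ∈ Ico s s', t - τ ∈ Icc (-τ) s := fun t ht =>
    ⟨by linarith [ht.1], by linarith [ht.2]⟩
  have hs_mem : s ∈ Icc (-τ) s := ⟨by linarith, le_rfl⟩
  -- on `[s, s']` the delayed terms are known and equal, so `y` solves an affine ODE
  have hyy : EqOn y y' (Icc s s') := by
    refine ODE_solution_unique_of_mem_Icc_right (s := fun _ => univ) (K := ‖β‖₊)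
      (v := fun t w => -β * w + G (x (t - τ)) (y (t - τ)))
      (fun t _ => (LipschitzWith.of_dist_le_mul fun w₁ w₂ => ?_).lipschitzOnWith)
      (h.continuousOn_y.mono hI)
      (fun t ht => (h.hasDerivWithinAt_Ici hτ hF.continuous hG (hIco t ht)).2)
      (fun _ _ => mem_univ _) (h'.continuousOn_y.mono hI) (fun t ht => ?_) (fun _ _ => mem_univ _)
      (hy hs_mem)
    · simp [Real.dist_eq, ← mul_sub, abs_mul]
    · rw [hx (hlag t ht), hy (hlag t ht)]
      exact (h'.hasDerivWithinAt_Ici hτ hF.continuous hG (hIco t ht)).2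
  -- `x` then solves `x' = F(x, y(t))`, whose field is Lipschitz on the compact range of both
  have hxx : EqOn x x' (Icc s s') := by
    have hxc := h.continuousOn_x.mono hI
    have hxc' := h'.continuousOn_x.mono hI
    obtain ⟨L, hL⟩ := hF.exists_lipschitzOnWith_prod
      ((isCompact_Icc.image_of_continuousOn hxc).union (isCompact_Icc.image_of_continuousOn hxc'))
      (isCompact_Icc.image_of_continuousOn (h.continuousOn_y.mono hI))
    refine ODE_solution_unique_of_mem_Icc_right (s := fun _ => x '' Icc s s' ∪ x' '' Icc s s')
      (v := fun t u => F u (y t)) (fun t ht => hL _ (mem_image_of_mem _ (Ico_subset_Icc_self ht)))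
      hxc (fun t ht => (h.hasDerivWithinAt_Ici hτ hF.continuous hG (hIco t ht)).1)
      (fun t ht => .inl (mem_image_of_mem _ (Ico_subset_Icc_self ht))) hxc' (fun t ht => ?_)
      (fun t ht => .inr (mem_image_of_mem _ (Ico_subset_Icc_self ht))) (hx hs_mem)
    rw [hyy (Ico_subset_Icc_self ht)]
    exact (h'.hasDerivWithinAt_Ici hτ hF.continuous hG (hIco t ht)).1
  rw [← Icc_union_Icc_eq_Icc (by linarith) hss']
  exact ⟨hx.union hxx, hy.union hyy⟩

theorem eqOn (h : IsDelaySolutionOn F G β τ φ₁ φ₂ T x y)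
    (h' : IsDelaySolutionOn F G β τ φ₁ φ₂ T x' y') (hτ : 0 < τ)
    (hF : LocallyLipschitz (uncurry F)) (hG : Continuous (uncurry G)) :
    EqOn x x' (Icc (-τ) T) ∧ EqOn y y' (Icc (-τ) T) := by
  have hhist : EqOn x x' (Icc (-τ) 0) ∧ EqOn y y' (Icc (-τ) 0) :=
    ⟨fun θ hθ => (h.history θ hθ).1.trans (h'.history θ hθ).1.symm,
      fun θ hθ => (h.history θ hθ).2.trans (h'.history θ hθ).2.symm⟩
  rcases lt_or_ge T 0 with hT | hT
  · exact ⟨hhist.1.mono (Icc_subset_Icc_right hT.le), hhist.2.mono (Icc_subset_Icc_right hT.le)⟩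
  have key : ∀ n : ℕ,
      EqOn x x' (Icc (-τ) (min (n * τ) T)) ∧ EqOn y y' (Icc (-τ) (min (n * τ) T)) := by
    intro n
    induction n with
    | zero => simpa [hT] using hhist
    | succ n ih =>
      refine h.eqOn_of_eqOn h' hτ.le hF hG (le_min (by positivity) hT)
        (min_le_min_right _ (by push_cast; linarith)) (min_le_right _ _) ?_ ih.1 ih.2
      rw [← min_add_add_right]
      exact min_le_min (by push_cast; linarith) (by linarith)
  obtain ⟨n, hn⟩ := exists_nat_ge (T / τ)
  simpa [min_eq_right ((div_le_iff₀ hτ).1 hn)] using key n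

theorem extend (h : IsDelaySolutionOn F G β τ φ₁ φ₂ T x y) (hτ : 0 ≤ τ) (hT : 0 ≤ T)
    {f w : ℝ → ℝ} (hf₀ : x T = f T) (hw₀ : y T = w T)
    (hf : ∀ t ∈ Icc T (T + τ), HasDerivWithinAt f (F (f t) (w t)) (Icc T (T + τ)) t)
    (hw : ∀ t ∈ Icc T (T + τ),
      HasDerivWithinAt w (-β * w t + G (x (t - τ)) (y (t - τ))) (Icc T (T + τ)) t) :
    IsDelaySolutionOn F G β τ φ₁ φ₂ (T + τ) (fun t => if t ≤ T then x t else f t)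
      (fun t => if t ≤ T then y t else w t) where
  continuousOn_x := h.continuousOn_x.ite_le_Icc hf₀
    (fun t ht => (hf t ht).continuousWithinAt) (by linarith) (by linarith)
  continuousOn_y := h.continuousOn_y.ite_le_Icc hw₀
    (fun t ht => (hw t ht).continuousWithinAt) (by linarith) (by linarith)
  history θ hθ := by simpa [hθ.2.trans hT] using h.history θ hθ
  hasDerivWithinAt_x t ht := by
    refine .ite_le_Icc hf₀ (fun htT => ?_) (fun hTt => ?_) (by linarith) (by linarith)
    · rw [if_pos htT, if_pos htT]
      exact h.hasDerivWithinAt_x t ⟨ht.1, htT⟩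
    · rw [ite_le_eq_right hf₀ hTt, ite_le_eq_right hw₀ hTt]
      exact hf t ⟨hTt, ht.2⟩
  hasDerivWithinAt_y t ht := by
    have hlag : t - τ ≤ T := by linarith [ht.2]
    rw [if_pos hlag, if_pos hlag]
    refine .ite_le_Icc hw₀ (fun htT => ?_) (fun hTt => ?_) (by linarith) (by linarith)
    · rw [if_pos htT]
      exact h.hasDerivWithinAt_y t ⟨ht.1, htT⟩
    · rw [ite_le_eq_right hw₀ hTt]
      exact hw t ⟨hTt, ht.2⟩

theorem exists_extension (h : IsDelaySolutionOn F G β τ φ₁ φ₂ T x y) (hτ : 0 ≤ τ) (hT : 0 ≤ T)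
    (hF : LocallyLipschitz (uncurry F)) (hG : Continuous (uncurry G))
    (hF₀ : ∀ w, 0 ≤ w → 0 ≤ F 0 w) (hFK : ∀ u w, K ≤ u → 0 ≤ w → F u w ≤ 0)
    (hG₀ : ∀ u w, 0 ≤ u → 0 ≤ w → 0 ≤ G u w) (hnn : ∀ t ∈ Icc (-τ) T, 0 ≤ x t ∧ 0 ≤ y t) :
    ∃ x' y', IsDelaySolutionOn F G β τ φ₁ φ₂ (T + τ) x' y' ∧
      ∀ t ∈ Icc (-τ) (T + τ), 0 ≤ x' t ∧ 0 ≤ y' t := by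
  have hlag : ∀ t ∈ Icc T (T + τ), t - τ ∈ Icc (-τ) T := fun t ht =>
    ⟨by linarith [ht.1], by linarith [ht.2]⟩
  have hTmem : T ∈ Icc (-τ) T := ⟨by linarith, le_rfl⟩
  -- on `[T, T + τ]` the predator equation is linear with a known nonnegative forcing
  obtain ⟨g, hg, hgeq⟩ := ((h.continuousOn_delay hG).mono
    (Icc_subset_Icc_left hT)).exists_continuous_eqOn_Icc (by linarith)
  obtain ⟨w, hw₀, hw, hwnn⟩ := exists_forall_hasDerivAt_linear_nonneg hg β (hnn T hTmem).2
    fun t ht => by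
      rw [hgeq ht]
      exact hG₀ _ _ (hnn _ (hlag t ht)).1 (hnn _ (hlag t ht)).2
  -- the prey equation then keeps `x` inside `[0, max K (x T)]`
  have hwc : Continuous w := continuous_iff_continuousAt.2 fun t => (hw t).continuousAt
  obtain ⟨L, hL⟩ := hF.exists_lipschitzOnWith_prod isCompact_Icc
    (isCompact_Icc.image_of_continuousOn (s := Icc T (T + τ)) hwc.continuousOn)
  obtain ⟨f, hf₀, hf⟩ := exists_forall_hasDerivWithinAt_mem_Icc (v := fun t u => F u (w t))
    (by linarith) ⟨(hnn T hTmem).1, le_max_right K (x T)⟩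
    (fun t ht => hL _ (mem_image_of_mem _ ht))
    (fun u _ => (hF.continuous.comp (continuous_const.prodMk hwc)).continuousOn)
    (fun t ht => hF₀ _ (hwnn t ht)) (fun t ht => hFK _ _ (le_max_left _ _) (hwnn t ht))
  refine ⟨_, _, h.extend hτ hT hf₀.symm hw₀.symm (fun t ht => (hf t ht).1) fun t ht => ?_,
    fun t ht => ?_⟩
  · have := (hw t).hasDerivWithinAt (s := Icc T (T + τ))
    rwa [hgeq ht] at this
  · by_cases htT : t ≤ T
    · simpa [htT] using hnn t ⟨ht.1, htT⟩
    · have ht' : t ∈ Icc T (T + τ) := ⟨le_of_not_ge htT, ht.2⟩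
      simpa [htT] using ⟨(hf t ht').2.1, hwnn t ht'⟩

end IsDelaySolutionOn

section Global

variable {F G : ℝ → ℝ → ℝ} {β τ K : ℝ} {φ₁ φ₂ x y : ℝ → ℝ}

theorem exists_isDelaySolutionOn (hτ : 0 < τ) (hF : LocallyLipschitz (uncurry F))
    (hG : Continuous (uncurry G)) (hF₀ : ∀ w, 0 ≤ w → 0 ≤ F 0 w)
    (hFK : ∀ u w, K ≤ u → 0 ≤ w → F u w ≤ 0) (hG₀ : ∀ u w, 0 ≤ u → 0 ≤ w → 0 ≤ G u w)
    (hφ₁c : ContinuousOn φ₁ (Icc (-τ) 0)) (hφ₂c : ContinuousOn φ₂ (Icc (-τ) 0))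
    (hφ₁ : ∀ θ ∈ Icc (-τ) 0, 0 ≤ φ₁ θ) (hφ₂ : ∀ θ ∈ Icc (-τ) 0, 0 ≤ φ₂ θ) (T : ℝ) :
    ∃ x y, IsDelaySolutionOn F G β τ φ₁ φ₂ T x y ∧ ∀ t ∈ Icc (-τ) T, 0 ≤ x t ∧ 0 ≤ y t := by
  have key : ∀ n : ℕ, ∃ x y, IsDelaySolutionOn F G β τ φ₁ φ₂ (n * τ) x y ∧
      ∀ t ∈ Icc (-τ) (n * τ), 0 ≤ x t ∧ 0 ≤ y t := by
    intro n
    induction n with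
    | zero =>
      refine ⟨φ₁, φ₂, ?_, fun t ht => ?_⟩
      · simpa using (⟨hφ₁c, hφ₂c, fun _ _ => ⟨rfl, rfl⟩, fun t ht => (ht.1.not_ge ht.2).elim,
          fun t ht => (ht.1.not_ge ht.2).elim⟩ : IsDelaySolutionOn F G β τ φ₁ φ₂ 0 φ₁ φ₂)
      · simp only [CharP.cast_eq_zero, zero_mul] at ht
        exact ⟨hφ₁ t ht, hφ₂ t ht⟩
    | succ n ih =>
      obtain ⟨x, y, h, hnn⟩ := ih
      rw [Nat.cast_succ, add_one_mul]
      exact h.exists_extension hτ.le (by positivity) hF hG hF₀ hFK hG₀ hnn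
  obtain ⟨n, hn⟩ := exists_nat_ge (T / τ)
  have hTn : T ≤ n * τ := (div_le_iff₀ hτ).1 hn
  obtain ⟨x, y, h, hnn⟩ := key n
  exact ⟨x, y, h.mono hTn, fun t ht => hnn t ⟨ht.1, ht.2.trans hTn⟩⟩

theorem isDelaySolution_iff_forall_isDelaySolutionOn (hτ : 0 ≤ τ) :
    IsDelaySolution F G β τ φ₁ φ₂ x y ↔ ∀ T ≥ 0, IsDelaySolutionOn F G β τ φ₁ φ₂ T x y := by
  refine ⟨fun ⟨hx, hy, hhist, hd⟩ T _ => ⟨hx.mono Icc_subset_Ici_self, hy.mono Icc_subset_Ici_self,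
    hhist, fun t ht => (hd t ht.1).1.hasDerivWithinAt, fun t ht => (hd t ht.1).2.hasDerivWithinAt⟩,
    fun h => ?_⟩
  have hlt : ∀ t : ℝ, t < |t| + 1 := fun t => (le_abs_self t).trans_lt (lt_add_one _)
  have hsol : ∀ t : ℝ, IsDelaySolutionOn F G β τ φ₁ φ₂ (|t| + 1) x y := fun t =>
    h _ (by positivity)
  have hloc : ∀ t : ℝ, Ici (-τ) ∩ Iio (|t| + 1) ⊆ Icc (-τ) (|t| + 1) := fun t s hs =>
    ⟨hs.1, le_of_lt hs.2⟩
  refine ⟨continuousOn_of_locally_continuousOn fun t _ =>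
      ⟨_, isOpen_Iio, hlt t, (hsol t).continuousOn_x.mono (hloc t)⟩,
    continuousOn_of_locally_continuousOn fun t _ =>
      ⟨_, isOpen_Iio, hlt t, (hsol t).continuousOn_y.mono (hloc t)⟩,
    (h 0 le_rfl).history, fun t ht => ?_⟩
  have hmem : Icc (-τ) (|t| + 1) ∈ 𝓝 t := Icc_mem_nhds (by linarith [gt_iff_lt.1 ht]) (hlt t)
  exact ⟨((hsol t).hasDerivWithinAt_x t ⟨ht, (hlt t).le⟩).hasDerivAt hmem,
    ((hsol t).hasDerivWithinAt_y t ⟨ht, (hlt t).le⟩).hasDerivAt hmem⟩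

theorem exists_isDelaySolution_nonneg_unique (hτ : 0 < τ) (hF : LocallyLipschitz (uncurry F))
    (hG : Continuous (uncurry G)) (hF₀ : ∀ w, 0 ≤ w → 0 ≤ F 0 w)
    (hFK : ∀ u w, K ≤ u → 0 ≤ w → F u w ≤ 0) (hG₀ : ∀ u w, 0 ≤ u → 0 ≤ w → 0 ≤ G u w)
    (hφ₁c : ContinuousOn φ₁ (Icc (-τ) 0)) (hφ₂c : ContinuousOn φ₂ (Icc (-τ) 0))
    (hφ₁ : ∀ θ ∈ Icc (-τ) 0, 0 ≤ φ₁ θ) (hφ₂ : ∀ θ ∈ Icc (-τ) 0, 0 ≤ φ₂ θ) :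
    ∃ x y : ℝ → ℝ, IsDelaySolution F G β τ φ₁ φ₂ x y ∧
      (∀ t ≥ (0 : ℝ), 0 ≤ x t ∧ 0 ≤ y t) ∧
      (∀ x' y' : ℝ → ℝ, IsDelaySolution F G β τ φ₁ φ₂ x' y' →
        ∀ t ≥ -τ, x' t = x t ∧ y' t = y t) := by
  choose X Y hXY hnn using
    exists_isDelaySolutionOn (β := β) hτ hF hG hF₀ hFK hG₀ hφ₁c hφ₂c hφ₁ hφ₂
  -- solutions on different horizons agree, so they fit together
  have hagree : ∀ T, ∀ t ∈ Icc (-τ) T, X (t + 1) t = X T t ∧ Y (t + 1) t = Y T t := by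
    intro T t ht
    have := ((hXY (t + 1)).mono (min_le_left _ T)).eqOn ((hXY T).mono (min_le_right _ _)) hτ hF hG
    have ht' : t ∈ Icc (-τ) (min (t + 1) T) := ⟨ht.1, le_min (by linarith) ht.2⟩
    exact ⟨this.1 ht', this.2 ht'⟩
  have hsol : ∀ T ≥ 0,
      IsDelaySolutionOn F G β τ φ₁ φ₂ T (fun t => X (t + 1) t) (fun t => Y (t + 1) t) :=
    fun T hT => (hXY T).congr hτ.le hT (fun t ht => (hagree T t ht).1) fun t ht => (hagree T t ht).2
  refine ⟨_, _, (isDelaySolution_iff_forall_isDelaySolutionOn hτ.le).2 hsol,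
    fun t ht => hnn (t + 1) t ⟨by linarith, by linarith⟩, fun x' y' h' t ht => ?_⟩
  have := ((isDelaySolution_iff_forall_isDelaySolutionOn hτ.le).1 h' |t| (abs_nonneg t)).eqOn
    (hsol |t| (abs_nonneg t)) hτ hF hG
  exact ⟨this.1 ⟨ht, le_abs_self t⟩, this.2 ⟨ht, le_abs_self t⟩⟩

end Global

noncomputable def preyRate (r K a γ u w : ℝ) : ℝ :=
  r * (1 - u / K) * u - γ * u ^ 2 * w / (a ^ 2 + u ^ 2)

noncomputable def predatorGain (a γ N u w : ℝ) : ℝ :=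
  γ * u ^ 2 / (a ^ 2 + u ^ 2) * w * Real.exp (-w / N)

theorem locallyLipschitz_preyRate {r K a γ : ℝ} (ha : 0 < a) :
    LocallyLipschitz (uncurry (preyRate r K a γ)) := by
  refine ContDiff.locallyLipschitz (𝕂 := ℝ) ?_
  unfold preyRate uncurry
  fun_prop (disch := intro; positivity)

theorem continuous_predatorGain {a γ N : ℝ} (ha : 0 < a) :
    Continuous (uncurry (predatorGain a γ N)) := by
  unfold predatorGain uncurry
  fun_prop (disch := intro; positivity)

theorem preyRate_zero_left (r K a γ w : ℝ) : preyRate r K a γ 0 w = 0 := by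
  simp [preyRate]

theorem preyRate_nonpos {r K a γ u w : ℝ} (hr : 0 ≤ r) (hK : 0 < K) (hγ : 0 ≤ γ) (hu : K ≤ u)
    (hw : 0 ≤ w) : preyRate r K a γ u w ≤ 0 := by
  have h1 : r * (1 - u / K) * u ≤ 0 :=
    mul_nonpos_of_nonpos_of_nonneg (mul_nonpos_of_nonneg_of_nonpos hr
      (sub_nonpos.2 ((one_le_div hK).2 hu))) (hK.le.trans hu)
  have h2 : 0 ≤ γ * u ^ 2 * w / (a ^ 2 + u ^ 2) := by positivity
  unfold preyRate
  linarith

theorem predatorGain_nonneg {a γ N u w : ℝ} (hγ : 0 ≤ γ) (hw : 0 ≤ w) :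
    0 ≤ predatorGain a γ N u w := by
  unfold predatorGain
  positivity

theorem isSolution_iff_isDelaySolution {r K a γ β N τ : ℝ} {φ₁ φ₂ x y : ℝ → ℝ} :
    IsSolution r K a γ β N τ φ₁ φ₂ x y ↔
      IsDelaySolution (preyRate r K a γ) (predatorGain a γ N) β τ φ₁ φ₂ x y :=
  Iff.rfl

theorem delayed_predator_prey_existence_uniqueness_nonneg_general
    (r K a γ β N τ : ℝ) (hr : 0 < r) (hK : 0 < K) (ha : 0 < a) (hγ : 0 < γ)
    (hτ : 0 < τ) (φ₁ φ₂ : ℝ → ℝ)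
    (hφ₁c : ContinuousOn φ₁ (Icc (-τ) 0)) (hφ₂c : ContinuousOn φ₂ (Icc (-τ) 0))
    (hφ₁ : ∀ θ ∈ Icc (-τ) 0, 0 ≤ φ₁ θ) (hφ₂ : ∀ θ ∈ Icc (-τ) 0, 0 ≤ φ₂ θ) :
    ∃ x y : ℝ → ℝ, IsSolution r K a γ β N τ φ₁ φ₂ x y ∧
      (∀ t ≥ (0 : ℝ), 0 ≤ x t ∧ 0 ≤ y t) ∧
      (∀ x' y' : ℝ → ℝ, IsSolution r K a γ β N τ φ₁ φ₂ x' y' →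
        ∀ t ≥ -τ, x' t = x t ∧ y' t = y t) := by
  simp only [isSolution_iff_isDelaySolution]
  exact exists_isDelaySolution_nonneg_unique hτ (locallyLipschitz_preyRate ha)
    (continuous_predatorGain ha) (fun w _ => (preyRate_zero_left r K a γ w).ge)
    (fun _ _ hu hw => preyRate_nonpos hr.le hK hγ.le hu hw)
    (fun _ _ _ hw => predatorGain_nonneg hγ.le hw) hφ₁c hφ₂c hφ₁ hφ₂

/-- For all positive parameters and all continuous nonnegative initial
conditions, the delayed predator–prey system has a unique solution defined on `[-τ, ∞)`,
and this solution is nonnegative for `t ≥ 0`. -/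
theorem delayed_predator_prey_existence_uniqueness_nonneg
    (r K a γ β N τ : ℝ) (hr : 0 < r) (hK : 0 < K) (ha : 0 < a) (hγ : 0 < γ)
    (hβ : 0 < β) (hN : 0 < N) (hτ : 0 < τ) (φ₁ φ₂ : ℝ → ℝ)
    (hφ₁c : ContinuousOn φ₁ (Icc (-τ) 0)) (hφ₂c : ContinuousOn φ₂ (Icc (-τ) 0))
    (hφ₁ : ∀ θ ∈ Icc (-τ) 0, 0 ≤ φ₁ θ) (hφ₂ : ∀ θ ∈ Icc (-τ) 0, 0 ≤ φ₂ θ) :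
    ∃ x y : ℝ → ℝ, IsSolution r K a γ β N τ φ₁ φ₂ x y ∧
      (∀ t ≥ (0 : ℝ), 0 ≤ x t ∧ 0 ≤ y t) ∧
      (∀ x' y' : ℝ → ℝ, IsSolution r K a γ β N τ φ₁ φ₂ x' y' →
        ∀ t ≥ -τ, x' t = x t ∧ y' t = y t) :=
  delayed_predator_prey_existence_uniqueness_nonneg_general r K a γ β N τ hr hK ha hγ hτ φ₁ φ₂ hφ₁c
    hφ₂c hφ₁ hφ₂
end

section
/- Let r, K, a, γ, β, N be positive real numbers. There exists a pair (x, y) with x > 0 and y > 0 satisfying the equilibrium equations r(1 − x/K)x = γ x² y/(a² + x²) and β y = (γ x²/(a² + x²)) y e^{−y/N} if and only if γ K²/(a² + K²) > β. -/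
/-!
Write `s(x) = γ x² / (a² + x²)` for the functional response. For `x, y > 0` the prey equation
says `y = r (1 - x/K) x / s(x)`, which forces `x < K`, and the predator equation says
`y = N log (s(x) / β)`, which forces `s(x) > β`; as `s` is increasing, `s(K) > β`.
Conversely, if `s(K) > β` pick `x₁ ∈ (0, K)` with `s(x₁) = β`. On `[x₁, K]` the two nullclines
cross by the intermediate value theorem: at `x₁` the predator nullcline vanishes while the prey
one is positive, and at `K` it is the other way round.
-/

open Real Set

noncomputable def hollingIII (γ a x : ℝ) : ℝ := γ * x ^ 2 / (a ^ 2 + x ^ 2)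

noncomputable def preyNullcline (r K γ a x : ℝ) : ℝ := r * (1 - x / K) * x / hollingIII γ a x

noncomputable def predatorNullcline (β N γ a x : ℝ) : ℝ := N * log (hollingIII γ a x / β)

section hollingIII

variable {γ a : ℝ}

@[simp]
lemma hollingIII_zero : hollingIII γ a 0 = 0 := by simp [hollingIII]

lemma hollingIII_pos (hγ : 0 < γ) {x : ℝ} (hx : x ≠ 0) : 0 < hollingIII γ a x := by
  unfold hollingIII; positivity

lemma hollingIII_monotoneOn (hγ : 0 ≤ γ) : MonotoneOn (hollingIII γ a) (Ioi 0) := by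
  intro x (hx : 0 < x) y (hy : 0 < y) hxy
  have hx' : 0 < a ^ 2 + x ^ 2 := by positivity
  have hy' : 0 < a ^ 2 + y ^ 2 := by positivity
  unfold hollingIII
  rw [div_le_div_iff₀ hx' hy']
  have : x ^ 2 ≤ y ^ 2 := pow_le_pow_left₀ hx.le hxy 2
  nlinarith [mul_le_mul_of_nonneg_left this (mul_nonneg hγ (sq_nonneg a))]

lemma continuous_hollingIII (ha : a ≠ 0) : Continuous (hollingIII γ a) :=
  (by fun_prop : Continuous fun x : ℝ => γ * x ^ 2).div (by fun_prop) fun x =>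
    (add_pos_of_pos_of_nonneg (by positivity) (sq_nonneg x)).ne'

lemma exists_hollingIII_eq (ha : a ≠ 0) {K β : ℝ} (hK : 0 < K) (hβ : 0 < β)
    (hβK : β < hollingIII γ a K) : ∃ x ∈ Ioo 0 K, hollingIII γ a x = β :=
  intermediate_value_Ioo hK.le (continuous_hollingIII ha).continuousOn ⟨by simpa using hβ, hβK⟩

end hollingIII

lemma lt_of_logistic_pos {r K x : ℝ} (hr : 0 ≤ r) (hK : 0 < K) (hx : 0 ≤ x)
    (h : 0 < r * (1 - x / K) * x) : x < K := by
  by_contra! hKx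
  have : 1 - x / K ≤ 0 := by rw [sub_nonpos, one_le_div hK]; exact hKx
  have := mul_nonpos_of_nonneg_of_nonpos hr this
  nlinarith [mul_nonpos_of_nonpos_of_nonneg this hx]

lemma prey_equation_iff {r K γ a x y : ℝ} (hγ : 0 < γ) (hx : x ≠ 0) :
    r * (1 - x / K) * x = γ * x ^ 2 * y / (a ^ 2 + x ^ 2) ↔ y = preyNullcline r K γ a x := by
  rw [preyNullcline, eq_div_iff (hollingIII_pos hγ hx).ne', mul_div_right_comm, eq_comm,
    mul_comm y]
  rfl

lemma predator_equation_iff {β s y N : ℝ} (hβ : 0 < β) (hs : 0 < s) (hy : y ≠ 0) (hN : N ≠ 0) :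
    β * y = s * y * exp (-y / N) ↔ y = N * log (s / β) := by
  calc β * y = s * y * exp (-y / N) ↔ exp (-y / N) = exp (log (β / s)) := by
        rw [mul_right_comm, mul_left_inj' hy, exp_log (div_pos hβ hs), eq_div_iff hs.ne',
          mul_comm, eq_comm]
    _ ↔ y = N * log (s / β) := by
        rw [exp_eq_exp, ← inv_div s β, log_inv, div_eq_iff hN, neg_mul, neg_inj, mul_comm]

lemma preyNullcline_pos {r K γ a x : ℝ} (hr : 0 < r) (hγ : 0 < γ) (hx : x ∈ Ioo 0 K) :
    0 < preyNullcline r K γ a x := by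
  obtain ⟨hx0, hxK⟩ := hx
  have hlogistic : 0 < 1 - x / K := by rw [sub_pos, div_lt_one (hx0.trans hxK)]; exact hxK
  have hs : 0 < hollingIII γ a x := hollingIII_pos hγ hx0.ne'
  unfold preyNullcline; positivity

lemma exists_preyNullcline_eq_predatorNullcline {r K a γ β N : ℝ} (hr : 0 < r) (hK : 0 < K)
    (ha : a ≠ 0) (hγ : 0 < γ) (hβ : 0 < β) (hN : 0 < N) (hβK : β < hollingIII γ a K) :
    ∃ x ∈ Ioo 0 K, preyNullcline r K γ a x = predatorNullcline β N γ a x := by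
  obtain ⟨x₁, hx₁, hβx₁⟩ := exists_hollingIII_eq ha hK hβ hβK
  have hs : ∀ x ∈ Icc x₁ K, hollingIII γ a x ≠ 0 := fun x hx =>
    (hollingIII_pos hγ (hx₁.1.trans_le hx.1).ne').ne'
  have hcont : ContinuousOn (fun x => preyNullcline r K γ a x - predatorNullcline β N γ a x)
      (Icc x₁ K) := by
    have hsc := continuous_hollingIII (γ := γ) ha
    have hlogistic : Continuous fun x => r * (1 - x / K) * x := by fun_prop
    exact (hlogistic.continuousOn.div hsc.continuousOn hs).sub (continuousOn_const.mul
      ((hsc.div_const β).continuousOn.log fun x hx => div_ne_zero (hs x hx) hβ.ne'))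
  have hx₁' : 0 < preyNullcline r K γ a x₁ - predatorNullcline β N γ a x₁ := by
    simpa [predatorNullcline, hβx₁, hβ.ne'] using preyNullcline_pos (a := a) hr hγ hx₁
  have hK' : preyNullcline r K γ a K - predatorNullcline β N γ a K < 0 := by
    have : 0 < log (hollingIII γ a K / β) := log_pos ((one_lt_div hβ).2 hβK)
    simpa [preyNullcline, predatorNullcline, hK.ne'] using mul_pos hN this
  obtain ⟨x, hx, hx0⟩ := intermediate_value_Ioo' hx₁.2.le hcont ⟨hK', hx₁'⟩
  exact ⟨x, ⟨hx₁.1.trans hx.1, hx.2⟩, sub_eq_zero.1 hx0⟩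

/-- For positive parameters `r, K, a, γ, β, N`, a positive equilibrium
`(x, y)` of the delayed predator–prey system exists (i.e. a positive solution of the
equilibrium equations) if and only if `γ K²/(a² + K²) > β`. -/
theorem positive_equilibrium_iff (r K a γ β N : ℝ) (hr : 0 < r) (hK : 0 < K)
    (ha : 0 < a) (hγ : 0 < γ) (hβ : 0 < β) (hN : 0 < N) :
    (∃ x y : ℝ, 0 < x ∧ 0 < y ∧
      r * (1 - x / K) * x = γ * x ^ 2 * y / (a ^ 2 + x ^ 2) ∧
      β * y = γ * x ^ 2 / (a ^ 2 + x ^ 2) * y * Real.exp (-y / N)) ↔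
    γ * K ^ 2 / (a ^ 2 + K ^ 2) > β := by
  change _ ↔ β < hollingIII γ a K
  constructor
  · rintro ⟨x, y, hx, hy, hprey, hpredator⟩
    have hs : 0 < hollingIII γ a x := hollingIII_pos hγ hx.ne'
    have hxK : x < K := by
      refine lt_of_logistic_pos hr.le hK hx.le ?_
      rw [hprey, mul_div_right_comm]
      exact mul_pos hs hy
    have hβx : β < hollingIII γ a x := by
      have hlog := (predator_equation_iff hβ hs hy.ne' hN.ne').1 hpredator ▸ hy
      rw [← one_lt_div hβ, ← log_pos_iff (by positivity)]
      exact pos_of_mul_pos_right hlog hN.le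
    exact hβx.trans_le (hollingIII_monotoneOn hγ.le hx hK hxK.le)
  · intro hβK
    obtain ⟨x, hx, hcross⟩ := exists_preyNullcline_eq_predatorNullcline hr hK ha.ne' hγ hβ hN hβK
    have hy := preyNullcline_pos (a := a) hr hγ hx
    exact ⟨x, _, hx.1, hy, (prey_equation_iff hγ hx.1.ne').2 rfl,
      (predator_equation_iff hβ (hollingIII_pos hγ hx.1.ne') hy.ne' hN.ne').2 hcross⟩
end

section
/- Let m, n, p, q be real numbers, τ ≥ 0, and ω a real number such that n·iω + q ≠ 0 (as a complex number). If iω is a root of the transcendental equation λ² + mλ + nλe^{−λτ} + p + qe^{−λτ} = 0, then ω satisfies ω⁴ + (m² − n² − 2p)ω² + p² − q² = 0 and cos(ωτ)·(q² + n²ω²) = qω² − pq − nmω². -/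
/-!
Write `C = cos ωτ`, `S = sin ωτ`, so that `e^{-iωτ} = C - iS`. The real and imaginary parts of
`F(iω) = 0` say that the vector `(C, S)` is sent by the matrix `[[q, nω], [nω, -q]]` to
`(ω² - p, -mω)`. That matrix is `√(q² + n²ω²)` times a reflection, so comparing lengths (using
`C² + S² = 1`) gives the quartic equation for `ω`, and applying the matrix once more gives `C`.
-/

open Complex

noncomputable def delayCharFun (m n p q τ : ℝ) (z : ℂ) : ℂ :=
  z ^ 2 + m * z + n * z * exp (-z * τ) + p + q * exp (-z * τ)

theorem exp_neg_I_mul_ofReal_mul (ω τ : ℝ) :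
    exp (-(I * ω) * τ) = Real.cos (ω * τ) - Real.sin (ω * τ) * I := by
  have h : -(I * ω) * τ = ((-(ω * τ) : ℝ) : ℂ) * I := by push_cast; ring
  rw [h, exp_mul_I, ← ofReal_cos, ← ofReal_sin, Real.cos_neg, Real.sin_neg]
  push_cast
  ring

section DelayCharFun

variable (m n p q τ ω : ℝ)

theorem delayCharFun_I_mul_re :
    (delayCharFun m n p q τ (I * ω)).re =
      q * Real.cos (ω * τ) + n * ω * Real.sin (ω * τ) - (ω ^ 2 - p) := by
  simp only [delayCharFun, exp_neg_I_mul_ofReal_mul, pow_two, add_re, sub_re, sub_im,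
    mul_re, mul_im, I_re, I_im, ofReal_re, ofReal_im]
  ring

theorem delayCharFun_I_mul_im :
    (delayCharFun m n p q τ (I * ω)).im =
      n * ω * Real.cos (ω * τ) - q * Real.sin (ω * τ) + m * ω := by
  simp only [delayCharFun, exp_neg_I_mul_ofReal_mul, pow_two, add_im, sub_re, sub_im,
    mul_re, mul_im, I_re, I_im, ofReal_re, ofReal_im]
  ring

end DelayCharFun

theorem sq_add_sq_and_mul_eq_of_reflection {a b x y u v : ℝ} (hxy : x ^ 2 + y ^ 2 = 1)
    (hu : a * x + b * y = u) (hv : b * x - a * y = v) :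
    u ^ 2 + v ^ 2 = a ^ 2 + b ^ 2 ∧ x * (a ^ 2 + b ^ 2) = a * u + b * v := by
  subst hu hv
  exact ⟨by linear_combination (a ^ 2 + b ^ 2) * hxy, by ring⟩

theorem purely_imaginary_root_necessary_conditions_general
    (m n p q τ ω : ℝ)
    (hroot : (Complex.I * (ω : ℂ)) ^ 2 + (m : ℂ) * (Complex.I * (ω : ℂ)) +
      (n : ℂ) * (Complex.I * (ω : ℂ)) * Complex.exp (-(Complex.I * (ω : ℂ)) * (τ : ℂ)) +
      (p : ℂ) + (q : ℂ) * Complex.exp (-(Complex.I * (ω : ℂ)) * (τ : ℂ)) = 0) :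
    ω ^ 4 + (m ^ 2 - n ^ 2 - 2 * p) * ω ^ 2 + p ^ 2 - q ^ 2 = 0 ∧
    Real.cos (ω * τ) * (q ^ 2 + n ^ 2 * ω ^ 2) = q * ω ^ 2 - p * q - n * m * ω ^ 2 := by
  change delayCharFun m n p q τ (I * ω) = 0 at hroot
  have hre := delayCharFun_I_mul_re m n p q τ ω
  have him := delayCharFun_I_mul_im m n p q τ ω
  rw [hroot, zero_re, eq_comm, sub_eq_zero] at hre
  rw [hroot, zero_im, eq_comm, add_eq_zero_iff_eq_neg] at him
  obtain ⟨hnorm, hcos⟩ := sq_add_sq_and_mul_eq_of_reflection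
    (Real.cos_sq_add_sin_sq (ω * τ)) hre him
  constructor
  · linear_combination hnorm
  · linear_combination hcos

/-- If `iω` is a purely imaginary root of the transcendental equation
`λ² + mλ + nλe^{−λτ} + p + qe^{−λτ} = 0` (with `n·iω + q ≠ 0`), then `ω` satisfies
`ω⁴ + (m² − n² − 2p)ω² + p² − q² = 0` and
`cos(ωτ)·(q² + n²ω²) = qω² − pq − nmω²`. -/
theorem purely_imaginary_root_necessary_conditions
    (m n p q τ ω : ℝ) (hτ : 0 ≤ τ)
    (hnq : (n : ℂ) * (Complex.I * (ω : ℂ)) + (q : ℂ) ≠ 0)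
    (hroot : (Complex.I * (ω : ℂ)) ^ 2 + (m : ℂ) * (Complex.I * (ω : ℂ)) +
      (n : ℂ) * (Complex.I * (ω : ℂ)) * Complex.exp (-(Complex.I * (ω : ℂ)) * (τ : ℂ)) +
      (p : ℂ) + (q : ℂ) * Complex.exp (-(Complex.I * (ω : ℂ)) * (τ : ℂ)) = 0) :
    ω ^ 4 + (m ^ 2 - n ^ 2 - 2 * p) * ω ^ 2 + p ^ 2 - q ^ 2 = 0 ∧
    Real.cos (ω * τ) * (q ^ 2 + n ^ 2 * ω ^ 2) = q * ω ^ 2 - p * q - n * m * ω ^ 2 :=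
  purely_imaginary_root_necessary_conditions_general m n p q τ ω hroot
end

section
/- Let m, n, p, q be real numbers with 2p + n² − m² < 0 and p² − q² > 0, and let τ ≥ 0. Then the transcendental equation λ² + mλ + nλe^{−λτ} + p + qe^{−λτ} = 0 has no purely imaginary root; that is, for every real ω, F(iω) ≠ 0. -/
/-!
On the imaginary axis the delay factor `e^{-iωτ}` has modulus one, so `F(iω) = 0` forces
`|p - ω² + imω| = |q + inω|`, i.e. `ω⁴ + (m² - n² - 2p) ω² + p² - q² = 0`.
Both coefficients of this quadratic in `ω²` are positive, so it has no root `ω² ≥ 0`.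
-/

open Complex

lemma normSq_exp_neg_I_mul_ofReal_mul (ω τ : ℝ) : normSq (exp (-(I * ω) * τ)) = 1 := by
  rw [normSq_eq_norm_sq, norm_exp]
  simp

lemma sq_add_sq_eq_of_isRoot_imaginary {m n p q ω : ℝ} {e : ℂ} (he : normSq e = 1)
    (h : (I * ω) ^ 2 + m * (I * ω) + n * (I * ω) * e + p + q * e = 0) :
    (p - ω ^ 2) ^ 2 + (m * ω) ^ 2 = q ^ 2 + (n * ω) ^ 2 := by
  have key : ((p - ω ^ 2 : ℝ) : ℂ) + ((m * ω : ℝ) : ℂ) * I = -((q : ℂ) + ((n * ω : ℝ) : ℂ) * I) * e := by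
    push_cast
    linear_combination h - (ω : ℂ) ^ 2 * I_sq
  have := congrArg normSq key
  rwa [normSq_add_mul_I, normSq_mul, normSq_neg, normSq_add_mul_I, he, mul_one] at this

lemma sq_add_sq_lt_sq_sub_add_sq {m n p q : ℝ} (h1 : 2 * p + n ^ 2 - m ^ 2 < 0)
    (h2 : p ^ 2 - q ^ 2 > 0) (ω : ℝ) :
    q ^ 2 + (n * ω) ^ 2 < (p - ω ^ 2) ^ 2 + (m * ω) ^ 2 := by
  have hquartic : (p - ω ^ 2) ^ 2 + (m * ω) ^ 2 - (q ^ 2 + (n * ω) ^ 2)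
      = (ω ^ 2) ^ 2 + (m ^ 2 - n ^ 2 - 2 * p) * ω ^ 2 + (p ^ 2 - q ^ 2) := by ring
  rw [← sub_pos, hquartic]
  nlinarith [sq_nonneg (ω ^ 2), mul_nonneg (sq_nonneg ω) (neg_nonneg.2 h1.le)]

theorem no_purely_imaginary_root_general (m n p q τ : ℝ)
    (h1 : 2 * p + n ^ 2 - m ^ 2 < 0) (h2 : p ^ 2 - q ^ 2 > 0) :
    ∀ ω : ℝ,
      (Complex.I * (ω : ℂ)) ^ 2 + (m : ℂ) * (Complex.I * (ω : ℂ)) +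
      (n : ℂ) * (Complex.I * (ω : ℂ)) * Complex.exp (-(Complex.I * (ω : ℂ)) * (τ : ℂ)) +
      (p : ℂ) + (q : ℂ) * Complex.exp (-(Complex.I * (ω : ℂ)) * (τ : ℂ)) ≠ 0 := by
  intro ω h
  exact (sq_add_sq_lt_sq_sub_add_sq h1 h2 ω).ne'
    (sq_add_sq_eq_of_isRoot_imaginary (normSq_exp_neg_I_mul_ofReal_mul ω τ) h)

/-- If `2p + n² − m² < 0` and `p² − q² > 0`, then for every delay
`τ ≥ 0` the transcendental equation `λ² + mλ + nλe^{−λτ} + p + qe^{−λτ} = 0`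
has no purely imaginary root: `F(iω) ≠ 0` for every real `ω`. -/
theorem no_purely_imaginary_root (m n p q τ : ℝ) (hτ : 0 ≤ τ)
    (h1 : 2 * p + n ^ 2 - m ^ 2 < 0) (h2 : p ^ 2 - q ^ 2 > 0) :
    ∀ ω : ℝ,
      (Complex.I * (ω : ℂ)) ^ 2 + (m : ℂ) * (Complex.I * (ω : ℂ)) +
      (n : ℂ) * (Complex.I * (ω : ℂ)) * Complex.exp (-(Complex.I * (ω : ℂ)) * (τ : ℂ)) +
      (p : ℂ) + (q : ℂ) * Complex.exp (-(Complex.I * (ω : ℂ)) * (τ : ℂ)) ≠ 0 :=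
  no_purely_imaginary_root_general m n p q τ h1 h2
end

section
/- Let m, n, p, q be real numbers satisfying (A1) m + n > 0, (A2) p + q > 0, and (A3) n² − m² + 2p < 0 and p² − q² > 0. Then for every delay τ ≥ 0, every complex root λ of the transcendental equation λ² + mλ + nλe^{−λτ} + p + qe^{−λτ} = 0 has negative real part. -/
/-!
If `λ` is a root with `Re λ ≥ 0`, then `|e^{−λτ}| ≤ 1`, so the equation forces
`|λ² + mλ + p| ≤ |nλ + q|`. But with `λ = x + iy` the difference of the squared moduli is
`y⁴ + (2x² + 2mx + m² − n² − 2p) y² + (x² + (m+n)x + p+q)(x² + (m−n)x + p−q)`,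
and under (A1)–(A3) every coefficient here is positive for `x ≥ 0`.
-/

open Complex

lemma norm_exp_neg_mul_ofReal_le_one {z : ℂ} {τ : ℝ} (hz : 0 ≤ z.re) (hτ : 0 ≤ τ) :
    ‖exp (-z * τ)‖ ≤ 1 := by
  rw [norm_exp, Real.exp_le_one_iff, neg_mul, neg_re, re_mul_ofReal, neg_nonpos]
  exact mul_nonneg hz hτ

lemma norm_le_of_add_mul_eq_zero {a b w : ℂ} (h : a + b * w = 0) (hw : ‖w‖ ≤ 1) :
    ‖a‖ ≤ ‖b‖ := by
  rw [eq_neg_of_add_eq_zero_left h, norm_neg, norm_mul]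
  exact mul_le_of_le_one_right (norm_nonneg b) hw

lemma normSq_quadratic_sub_normSq_linear (m n p q : ℝ) (z : ℂ) :
    normSq (z ^ 2 + m * z + p) - normSq (n * z + q) =
      z.im ^ 4 + (2 * z.re ^ 2 + 2 * m * z.re + (m ^ 2 - n ^ 2 - 2 * p)) * z.im ^ 2 +
        (z.re ^ 2 + (m + n) * z.re + (p + q)) * (z.re ^ 2 + (m - n) * z.re + (p - q)) := by
  simp only [normSq_apply, pow_two, add_re, add_im, mul_re, mul_im, ofReal_re, ofReal_im]
  ring

lemma norm_linear_lt_norm_quadratic {m n p q : ℝ} (hmn : 0 < m + n) (hnm : 0 < m - n)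
    (hpq : 0 < p + q) (hqp : 0 < p - q) (hdisc : n ^ 2 - m ^ 2 + 2 * p < 0)
    {z : ℂ} (hz : 0 ≤ z.re) :
    ‖(n : ℂ) * z + q‖ < ‖z ^ 2 + m * z + p‖ := by
  rw [← sq_lt_sq₀ (norm_nonneg _) (norm_nonneg _), Complex.sq_norm, Complex.sq_norm, ← sub_pos,
    normSq_quadratic_sub_normSq_linear]
  have hm : 0 ≤ m * z.re := mul_nonneg (by linarith) hz
  have hcoeff : 0 ≤ 2 * z.re ^ 2 + 2 * m * z.re + (m ^ 2 - n ^ 2 - 2 * p) := by nlinarith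
  have hplus : 0 < z.re ^ 2 + (m + n) * z.re + (p + q) := by positivity
  have hminus : 0 < z.re ^ 2 + (m - n) * z.re + (p - q) := by positivity
  positivity

/-- Under (A1) `m + n > 0`, (A2) `p + q > 0`, and
(A3) `n² − m² + 2p < 0` and `p² − q² > 0`, every complex root of the transcendental
equation `λ² + mλ + nλe^{−λτ} + p + qe^{−λτ} = 0` has negative real part, for every
delay `τ ≥ 0`. -/
theorem all_roots_negative_real_part_A1_A2_A3 (m n p q : ℝ)
    (hA1 : m + n > 0) (hA2 : p + q > 0)
    (hA3 : n ^ 2 - m ^ 2 + 2 * p < 0 ∧ p ^ 2 - q ^ 2 > 0) :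
    ∀ τ : ℝ, 0 ≤ τ → ∀ z : ℂ,
      z ^ 2 + (m : ℂ) * z + (n : ℂ) * z * Complex.exp (-z * (τ : ℂ)) +
        (p : ℂ) + (q : ℂ) * Complex.exp (-z * (τ : ℂ)) = 0 →
      z.re < 0 := by
  obtain ⟨hdisc, hsq⟩ := hA3
  have hqp : 0 < p - q := pos_of_mul_pos_right (by nlinarith : 0 < (p + q) * (p - q)) hA2.le
  have hnm : 0 < m - n := pos_of_mul_pos_right (by nlinarith : 0 < (m + n) * (m - n)) hA1.le
  intro τ hτ z hroot
  by_contra! hz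
  have hle : ‖z ^ 2 + m * z + p‖ ≤ ‖(n : ℂ) * z + q‖ :=
    norm_le_of_add_mul_eq_zero (by linear_combination hroot)
      (norm_exp_neg_mul_ofReal_le_one hz hτ)
  exact (norm_linear_lt_norm_quadratic hA1 hnm hA2 hqp hdisc hz).not_ge hle
end

section
/- Let r, K, a, γ, β, N be positive parameters and τ > 0, and assume β > γ. Then for every continuous initial condition φ = (φ₁, φ₂) : [−τ, 0] → ℝ² with φ₁, φ₂ nonnegative and φ₁(0) > 0, φ₂(0) > 0, the solution (x(t), y(t)) of the delayed predator–prey system x'(t) = r(1 − x(t)/K)x(t) − γ x(t)² y(t)/(a² + x(t)²), y'(t) = −β y(t) + (γ x(t−τ)²/(a² + x(t−τ)²)) y(t−τ) e^{−y(t−τ)/N} converges to (K, 0) as t → +∞. -/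
/-!
Since the predator's birth term is at most `γ y(t - τ)` and `γ < β`, for small `l > 0` the
quantity `y(t) e^{l t}` can never reach a constant exceeding its initial values: at the first
time it did, its derivative would be negative. So `y → 0` exponentially fast. The prey then obeys
`x' = x (r (1 - x / K) - p(t))` with predation rate `|p| ≤ γ y / (2 a) → 0`; `x` stays
positive, and once `|p|` is small, `log x` is driven towards `log K` at a uniform rate whenever it
is a fixed distance away from it, so `x → K`.
-/

open Set Filter Topology Real

theorem IsMaxOn.hasDerivAt_nonneg_of_Icc {g : ℝ → ℝ} {G t₀ s : ℝ} (hts : t₀ < s)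
    (hmax : IsMaxOn g (Icc t₀ s) s) (hg : HasDerivAt g G s) : 0 ≤ G := by
  have hcone : t₀ - s ∈ posTangentConeAt (Icc t₀ s) s :=
    sub_mem_posTangentConeAt_of_segment_subset (by rw [segment_symm, segment_eq_Icc hts.le])
  have := hmax.localize.hasFDerivWithinAt_nonpos hg.hasFDerivAt.hasFDerivWithinAt hcone
  simp only [ContinuousLinearMap.toSpanSingleton_apply, smul_eq_mul] at this
  nlinarith

theorem lt_zero_of_deriv_neg_at_first_zero {g : ℝ → ℝ} {t₀ t₁ : ℝ} (hle : t₀ ≤ t₁)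
    (hc : ContinuousOn g (Icc t₀ t₁)) (h₀ : g t₀ < 0)
    (hd : ∀ s ∈ Ioc t₀ t₁, g s = 0 → (∀ u ∈ Icc t₀ s, g u ≤ 0) →
      ∃ G < 0, HasDerivAt g G s) :
    g t₁ < 0 := by
  by_contra! h₁
  set S := Icc t₀ t₁ ∩ g ⁻¹' Ici 0
  have hS : IsCompact S :=
    isCompact_Icc.of_isClosed_subset (hc.preimage_isClosed_of_isClosed isClosed_Icc isClosed_Ici)
      inter_subset_left
  obtain ⟨s, ⟨hsI, hs⟩, hsmin⟩ := hS.exists_isLeast ⟨t₁, ⟨hle, le_rfl⟩, h₁⟩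
  have hts : t₀ < s := hsI.1.lt_of_ne (by rintro rfl; exact (h₀.trans_le hs).false)
  have hzero : g s = 0 := by
    obtain ⟨u, hu, hgu⟩ :=
      intermediate_value_Icc hsI.1 (hc.mono (Icc_subset_Icc_right hsI.2)) ⟨h₀.le, hs⟩
    obtain rfl : u = s := le_antisymm hu.2 (hsmin ⟨⟨hu.1, hu.2.trans hsI.2⟩, hgu.ge⟩)
    exact hgu
  have hmax : IsMaxOn g (Icc t₀ s) s := fun u hu => by
    show g u ≤ g s
    rcases hu.2.lt_or_eq with hlt | rfl
    · rw [hzero]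
      by_contra! hpos
      exact hlt.not_ge (hsmin ⟨⟨hu.1, hlt.le.trans hsI.2⟩, hpos.le⟩)
    · exact le_rfl
  obtain ⟨G, hG, hder⟩ := hd s ⟨hts, hsI.2⟩ hzero fun u hu => hzero ▸ hmax hu
  exact hG.not_ge (hmax.hasDerivAt_nonneg_of_Icc hts hder)

theorem HasDerivAt.mul_exp_const_mul {y : ℝ → ℝ} {y' μ t : ℝ} (h : HasDerivAt y y' t) :
    HasDerivAt (fun u => y u * Real.exp (μ * u)) ((y' + μ * y t) * Real.exp (μ * t)) t :=
  (h.mul ((hasDerivAt_id' t).const_mul μ).exp).congr_deriv (by ring)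

theorem eventually_lt_of_deriv_le_neg {f f' : ℝ → ℝ} {T c δ : ℝ} (hδ : 0 < δ)
    (hc : ContinuousOn f (Ici T)) (hd : ∀ t > T, HasDerivAt f (f' t) t)
    (hneg : ∀ᶠ t in atTop, c ≤ f t → f' t ≤ -δ) : ∀ᶠ t in atTop, f t < c := by
  obtain ⟨T', hT'⟩ := (hneg.and (eventually_ge_atTop T)).exists_forall_of_atTop
  have hT'T : T ≤ T' := (hT' T' le_rfl).2
  have hcT' : ContinuousOn f (Ici T') := hc.mono (Ici_subset_Ici.2 hT'T)
  have hreach : ∃ s ≥ T', f s < c := by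
    by_contra! hge
    have hanti : AntitoneOn (fun t => f t + δ * t) (Ici T') := by
      refine antitoneOn_of_hasDerivWithinAt_nonpos (convex_Ici T') (hcT'.add (by fun_prop))
        (fun t ht => ?_) (fun t ht => ?_) (f' := fun t => f' t + δ)
      · rw [interior_Ici] at ht
        exact ((hd t (hT'T.trans_lt ht)).add ((hasDerivAt_id t).const_mul δ)).hasDerivWithinAt
          |>.congr_deriv (by simp)
      · rw [interior_Ici] at ht
        linarith [(hT' t ht.le).1 (hge t ht.le)]
    set t := T' + (|f T' - c| + 1) / δ
    have hT't : T' ≤ t := le_add_of_nonneg_right (by positivity)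
    have hdrop : f t + δ * t ≤ f T' + δ * T' := hanti (mem_Ici.2 le_rfl) hT't hT't
    have hδt : δ * (t - T') = |f T' - c| + 1 := by simp only [t]; field_simp; ring
    linarith [hge t hT't, le_abs_self (f T' - c)]
  obtain ⟨s, hsT', hs⟩ := hreach
  filter_upwards [eventually_ge_atTop s] with t hst
  have hg := lt_zero_of_deriv_neg_at_first_zero (g := fun u => f u - c) hst
    ((hcT'.mono (Icc_subset_Ici_iff hst |>.2 hsT')).sub continuousOn_const)
    (by simpa using hs)
    fun u hu hu0 _ => ⟨f' u, by linarith [(hT' u (hsT'.trans hu.1.le)).1 (by linarith)],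
      (hd u (by linarith [hu.1])).sub_const c⟩
  linarith

theorem pos_of_hasDerivAt_self_mul {f h : ℝ → ℝ} {t₀ t : ℝ}
    (hfc : ContinuousOn f (Ici t₀)) (hhc : ContinuousOn h (Ici t₀)) (h₀ : 0 < f t₀)
    (hd : ∀ t > t₀, HasDerivAt f (f t * h t) t) (ht : t₀ ≤ t) : 0 < f t := by
  obtain ⟨m, hm⟩ :=
    isCompact_Icc.bddBelow_image (hhc.mono (Icc_subset_Ici_self : Icc t₀ t ⊆ Ici t₀))
  -- `w` decays at rate `1 - m`, faster than `h ≥ m` lets `f` decay, so it stays below `f`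
  set w : ℝ → ℝ := fun u => f t₀ / 2 * exp ((m - 1) * (u - t₀))
  have hw : ∀ u, 0 < w u := fun u => by positivity
  suffices w t - f t < 0 by linarith [hw t]
  refine lt_zero_of_deriv_neg_at_first_zero (g := fun u => w u - f u) ht
    ((by fun_prop : Continuous w).continuousOn.sub (hfc.mono Icc_subset_Ici_self))
    (by simpa only [w, sub_self, mul_zero, exp_zero, mul_one, sub_neg, half_lt_self_iff])
    fun s hs hs0 _ => ?_
  have hws : HasDerivAt w ((m - 1) * w s) s :=
    ((((hasDerivAt_id' s).sub_const t₀).const_mul (m - 1)).exp.const_mul (f t₀ / 2))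
      |>.congr_deriv (by ring)
  refine ⟨_, ?_, hws.sub (hd s hs.1)⟩
  have hfs : f s = w s := by linarith
  have hms : m ≤ h s := hm ⟨s, ⟨hs.1.le, hs.2⟩, rfl⟩
  rw [hfs]
  nlinarith [hw s]

theorem nonneg_of_hasDerivAt_delay {y F : ℝ → ℝ} {β τ t : ℝ} (hτ : 0 < τ)
    (hc : ContinuousOn y (Ici (-τ))) (hinit : ∀ θ ∈ Icc (-τ) 0, 0 ≤ y θ)
    (hd : ∀ t > 0, HasDerivAt y (-β * y t + F t) t)
    (hF : ∀ t > 0, 0 ≤ y (t - τ) → 0 ≤ F t) (ht : -τ ≤ t) : 0 ≤ y t := by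
  -- method of steps: nonnegativity on `[-τ, nτ]` makes `F ≥ 0` on `[nτ, (n+1)τ]`
  suffices hsteps : ∀ n : ℕ, ∀ t ∈ Icc (-τ) (n * τ), 0 ≤ y t by
    obtain ⟨n, hn⟩ := exists_nat_ge (t / τ)
    exact hsteps n t ⟨ht, (div_le_iff₀ hτ).1 hn⟩
  intro n
  induction n with
  | zero => simpa using hinit
  | succ n ih =>
    intro t ht
    rcases le_or_gt t (n * τ) with hle | hlt
    · exact ih t ⟨ht.1, hle⟩
    have hnτ : 0 ≤ (n : ℝ) * τ := by positivity
    have hmono : MonotoneOn (fun u => y u * exp (β * u)) (Icc (n * τ) t) := by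
      refine monotoneOn_of_hasDerivWithinAt_nonneg (convex_Icc _ _)
        ((hc.mono fun u hu => ?_).mul (by fun_prop)) (fun u hu => ?_) (fun u hu => ?_)
        (f' := fun u => F u * exp (β * u))
      · exact (show -τ ≤ u by linarith [hu.1])
      · rw [interior_Icc] at hu
        exact ((hd u (hnτ.trans_lt hu.1)).mul_exp_const_mul.congr_deriv
          (by ring)).hasDerivWithinAt
      · rw [interior_Icc] at hu
        have hdelay : 0 ≤ y (u - τ) :=
          ih _ ⟨by linarith [hu.1], by push_cast at ht; linarith [hu.2, ht.2]⟩
        exact mul_nonneg (hF u (hnτ.trans_lt hu.1) hdelay) (exp_pos _).le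
    have h := hmono ⟨le_rfl, hlt.le⟩ ⟨hlt.le, le_rfl⟩ hlt.le
    have hyn : 0 ≤ y (n * τ) := ih _ ⟨by linarith, le_rfl⟩
    exact nonneg_of_mul_nonneg_left ((mul_nonneg hyn (exp_pos _).le).trans h) (exp_pos _)

theorem exists_pos_mul_exp_add_lt {β γ τ : ℝ} (hβγ : γ < β) :
    ∃ l > 0, γ * exp (l * τ) + l < β := by
  have hnear : ∀ᶠ l in 𝓝 0, γ * exp (l * τ) + l < β :=
    (by fun_prop : Continuous fun l => γ * exp (l * τ) + l).continuousAt.eventually_lt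
      continuousAt_const (by simpa using hβγ)
  obtain ⟨l, hl, hl0⟩ := ((hnear.filter_mono nhdsWithin_le_nhds).and
    (self_mem_nhdsWithin : Ioi (0 : ℝ) ∈ 𝓝[>] 0)).exists
  exact ⟨l, hl0, hl⟩

theorem tendsto_zero_of_hasDerivAt_delay {y F : ℝ → ℝ} {β γ τ : ℝ} (hγ : 0 ≤ γ)
    (hβγ : γ < β) (hτ : 0 ≤ τ) (hc : ContinuousOn y (Ici (-τ)))
    (hnn : ∀ t ≥ -τ, 0 ≤ y t) (hd : ∀ t > 0, HasDerivAt y (-β * y t + F t) t)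
    (hF : ∀ t > 0, F t ≤ γ * y (t - τ)) :
    Tendsto y atTop (𝓝 0) := by
  obtain ⟨l, hl, hlβ⟩ := exists_pos_mul_exp_add_lt (τ := τ) hβγ
  obtain ⟨M, hM⟩ :=
    isCompact_Icc.bddAbove_image (hc.mono (Icc_subset_Ici_self : Icc (-τ) 0 ⊆ _))
  set C := M + 1
  have hinit : ∀ θ ∈ Icc (-τ) 0, y θ * exp (l * θ) < C := fun θ hθ => by
    have hexp : exp (l * θ) ≤ 1 :=
      exp_le_one_iff.2 (mul_nonpos_of_nonneg_of_nonpos hl.le hθ.2)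
    have hyM : y θ ≤ M := hM ⟨θ, hθ, rfl⟩
    nlinarith [hnn θ hθ.1]
  have hC : 0 < C := by
    have := hinit 0 ⟨by linarith, le_rfl⟩
    nlinarith [hnn 0 (by linarith), exp_pos (l * 0)]
  -- `y e^{l t}` cannot reach `C`: at the first time it would, the delayed term is too weak
  have hbound : ∀ t ≥ 0, y t * exp (l * t) < C := by
    intro t ht
    suffices y t * exp (l * t) - C < 0 by linarith
    refine lt_zero_of_deriv_neg_at_first_zero (g := fun u => y u * exp (l * u) - C) ht
      (((hc.mono fun u hu => mem_Ici.2 (by linarith [hu.1])).mul (by fun_prop)).sub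
        continuousOn_const)
      (by simpa using hinit 0 ⟨by linarith, le_rfl⟩) fun s hs hs0 hbefore => ?_
    refine ⟨_, ?_, ((hd s hs.1).mul_exp_const_mul).sub_const C⟩
    have hys : y s * exp (l * s) = C := by linarith
    have hdelay : y (s - τ) * exp (l * (s - τ)) ≤ C := by
      rcases le_or_gt 0 (s - τ) with hst | hst
      · linarith [hbefore (s - τ) ⟨hst, by linarith⟩]
      · exact (hinit _ ⟨by linarith [hs.1], hst.le⟩).le
    have hshift : exp (l * s) = exp (l * τ) * exp (l * (s - τ)) := by rw [← exp_add]; ring_nf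
    have hFs : F s * exp (l * s) ≤ γ * exp (l * τ) * C := by
      calc F s * exp (l * s) ≤ γ * y (s - τ) * exp (l * s) :=
            mul_le_mul_of_nonneg_right (hF s hs.1) (exp_pos _).le
        _ = γ * exp (l * τ) * (y (s - τ) * exp (l * (s - τ))) := by rw [hshift]; ring
        _ ≤ γ * exp (l * τ) * C := by gcongr
    nlinarith
  have hdecay : Tendsto (fun t => C * exp (-(l * t))) atTop (𝓝 0) := by
    simpa using (tendsto_exp_neg_atTop_nhds_zero.comp (tendsto_id.const_mul_atTop hl)).const_mul C
  refine squeeze_zero' ?_ ?_ hdecay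
  · filter_upwards [eventually_ge_atTop 0] with t ht using hnn t (by linarith)
  · filter_upwards [eventually_ge_atTop 0] with t ht
    rw [exp_neg, ← div_eq_mul_inv, le_div_iff₀ (exp_pos _)]
    exact (hbound t ht).le

theorem tendsto_of_hasDerivAt_logistic {x p : ℝ → ℝ} {r K T : ℝ} (hr : 0 < r) (hK : 0 < K)
    (hc : ContinuousOn x (Ici T)) (hpos : ∀ t ≥ T, 0 < x t)
    (hd : ∀ t > T, HasDerivAt x (x t * (r * (1 - x t / K) - p t)) t)
    (hp : Tendsto p atTop (𝓝 0)) : Tendsto x atTop (𝓝 K) := by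
  have hLc : ContinuousOn (fun t => log (x t)) (Ici T) := hc.log fun t ht => (hpos t ht).ne'
  have hLd : ∀ t > T, HasDerivAt (fun t => log (x t)) (r * (1 - x t / K) - p t) t :=
    fun t ht => ((hd t ht).log (hpos t ht.le).ne').congr_deriv
      (mul_div_cancel_left₀ _ (hpos t ht.le).ne')
  have hL : Tendsto (fun t => log (x t)) atTop (𝓝 (log K)) := by
    refine tendsto_order.2 ⟨fun c hc => ?_, fun c hc => ?_⟩
    · have hcK : exp c < K := (lt_log_iff_exp_lt hK).1 hc
      have hδ : 0 < r * (1 - exp c / K) / 2 := by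
        have : exp c / K < 1 := (div_lt_one hK).2 hcK
        have : 0 < 1 - exp c / K := by linarith
        positivity
      have hev := eventually_lt_of_deriv_le_neg (f := fun t => -log (x t)) (c := -c) hδ hLc.neg
        (fun t ht => (hLd t ht).neg) ?_
      · filter_upwards [hev] with t ht
        linarith
      filter_upwards [hp.eventually (gt_mem_nhds hδ), eventually_gt_atTop T] with t hpt hT hle
      have hxc : x t ≤ exp c := (log_le_iff_le_exp (hpos t hT.le)).1 (by linarith)
      have : r * (1 - exp c / K) ≤ r * (1 - x t / K) := by gcongr
      linarith
    · have hcK : K < exp c := (log_lt_iff_lt_exp hK).1 hc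
      have hδ : 0 < r * (exp c / K - 1) / 2 := by
        have : 1 < exp c / K := (one_lt_div hK).2 hcK
        have : 0 < exp c / K - 1 := by linarith
        positivity
      refine eventually_lt_of_deriv_le_neg hδ hLc hLd ?_
      filter_upwards [hp.eventually (lt_mem_nhds (neg_neg_of_pos hδ)), eventually_gt_atTop T]
        with t hpt hT hle
      have hxc : exp c ≤ x t := (le_log_iff_exp_le (hpos t hT.le)).1 hle
      have : r * (1 - x t / K) ≤ r * (1 - exp c / K) := by gcongr
      linarith
  have hexp := (continuous_exp.tendsto _).comp hL
  rw [exp_log hK] at hexp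
  refine hexp.congr' ?_
  filter_upwards [eventually_ge_atTop T] with t ht using exp_log (hpos t ht)

theorem abs_div_sq_add_sq_le {a : ℝ} (ha : 0 < a) (u : ℝ) :
    |u / (a ^ 2 + u ^ 2)| ≤ 1 / (2 * a) := by
  rw [abs_div, abs_of_pos (by positivity : 0 < a ^ 2 + u ^ 2),
    div_le_div_iff₀ (by positivity) (by positivity)]
  nlinarith [sq_nonneg (|u| - a), sq_abs u]

theorem mul_sq_div_mul_mul_exp_mem_Icc {γ a N u w : ℝ} (hγ : 0 ≤ γ) (hN : 0 ≤ N)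
    (hw : 0 ≤ w) : γ * u ^ 2 / (a ^ 2 + u ^ 2) * w * exp (-w / N) ∈ Icc 0 (γ * w) := by
  have hfrac : u ^ 2 / (a ^ 2 + u ^ 2) ≤ 1 :=
    div_le_one_of_le₀ (by nlinarith [sq_nonneg a]) (by positivity)
  have hexp : exp (-w / N) ≤ 1 :=
    exp_le_one_iff.2 (div_nonpos_of_nonpos_of_nonneg (by linarith) hN)
  refine ⟨by positivity, ?_⟩
  calc γ * u ^ 2 / (a ^ 2 + u ^ 2) * w * exp (-w / N)
      = γ * w * (u ^ 2 / (a ^ 2 + u ^ 2) * exp (-w / N)) := by ring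
    _ ≤ γ * w * 1 := by gcongr; exact mul_le_one₀ hfrac (exp_pos _).le hexp
    _ = γ * w := mul_one _

theorem global_convergence_to_K_zero_general
    (r K a γ β N τ : ℝ) (hr : 0 < r) (hK : 0 < K) (ha : 0 < a) (hγ : 0 < γ)
    (hN : 0 < N) (hτ : 0 < τ) (hβγ : β > γ) (φ₁ φ₂ : ℝ → ℝ)
    (hφ₂ : ∀ θ ∈ Icc (-τ) 0, 0 ≤ φ₂ θ)
    (hφ₁0 : 0 < φ₁ 0) (x y : ℝ → ℝ)
    (hsol : IsSolution r K a γ β N τ φ₁ φ₂ x y) :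
    Tendsto (fun t => (x t, y t)) atTop (nhds (K, 0)) := by
  obtain ⟨hxc, hyc, hinit, hode⟩ := hsol
  have hbirth := fun t (hy : 0 ≤ y (t - τ)) =>
    mul_sq_div_mul_mul_exp_mem_Icc (u := x (t - τ)) (a := a) hγ.le hN.le hy
  have hy_nonneg : ∀ t ≥ -τ, 0 ≤ y t := fun t ht =>
    nonneg_of_hasDerivAt_delay hτ hyc (fun θ hθ => (hinit θ hθ).2 ▸ hφ₂ θ hθ)
      (fun t ht => (hode t ht).2) (fun t _ hy => (hbirth t hy).1) ht
  have hy : Tendsto y atTop (𝓝 0) :=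
    tendsto_zero_of_hasDerivAt_delay hγ.le hβγ hτ.le hyc hy_nonneg (fun t ht => (hode t ht).2)
      fun t ht => (hbirth t (hy_nonneg _ (by linarith))).2
  set p : ℝ → ℝ := fun t => γ * (y t * (x t / (a ^ 2 + x t ^ 2)))
  have hx_ode : ∀ t > 0, HasDerivAt x (x t * (r * (1 - x t / K) - p t)) t :=
    fun t ht => (hode t ht).1.congr_deriv (by simp only [p]; ring)
  have hxc₀ : ContinuousOn x (Ici 0) := hxc.mono (Ici_subset_Ici.2 (by linarith))
  have hyc₀ : ContinuousOn y (Ici 0) := hyc.mono (Ici_subset_Ici.2 (by linarith))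
  have hx_pos : ∀ t ≥ 0, 0 < x t := fun t ht =>
    pos_of_hasDerivAt_self_mul hxc₀ (by fun_prop (disch := intros; positivity))
      ((hinit 0 ⟨by linarith, le_rfl⟩).1 ▸ hφ₁0) hx_ode ht
  have hp : Tendsto p atTop (𝓝 0) := by
    simpa using (hy.zero_mul_isBoundedUnder_le ⟨1 / (2 * a),
      eventually_map.2 (.of_forall fun t => abs_div_sq_add_sq_le ha (x t))⟩).const_mul γ
  exact (tendsto_of_hasDerivAt_logistic hr hK hxc₀ hx_pos hx_ode hp).prodMk_nhds hy

/-- If `β > γ`, then for every continuous nonnegative initial condition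
`φ = (φ₁, φ₂)` with `φ₁(0) > 0` and `φ₂(0) > 0`, the solution of the delayed
predator–prey system converges to `(K, 0)` as `t → +∞`. -/
theorem global_convergence_to_K_zero
    (r K a γ β N τ : ℝ) (hr : 0 < r) (hK : 0 < K) (ha : 0 < a) (hγ : 0 < γ)
    (hβ : 0 < β) (hN : 0 < N) (hτ : 0 < τ) (hβγ : β > γ) (φ₁ φ₂ : ℝ → ℝ)
    (hφ₁c : ContinuousOn φ₁ (Icc (-τ) 0)) (hφ₂c : ContinuousOn φ₂ (Icc (-τ) 0))
    (hφ₁ : ∀ θ ∈ Icc (-τ) 0, 0 ≤ φ₁ θ) (hφ₂ : ∀ θ ∈ Icc (-τ) 0, 0 ≤ φ₂ θ)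
    (hφ₁0 : 0 < φ₁ 0) (hφ₂0 : 0 < φ₂ 0) (x y : ℝ → ℝ)
    (hsol : IsSolution r K a γ β N τ φ₁ φ₂ x y) :
    Tendsto (fun t => (x t, y t)) atTop (nhds (K, 0)) :=
  global_convergence_to_K_zero_general r K a γ β N τ hr hK ha hγ hN hτ hβγ φ₁ φ₂ hφ₂ hφ₁0 x y hsol
end

section
/- Let r, K, a, γ, β be positive real numbers with β > γK²/(a² + K²). Then for every delay τ ≥ 0, every complex root λ of the characteristic equation λ² + (r + β)λ − (γK²/(a² + K²)) λ e^{−λτ} + rβ − (rγK²/(a² + K²)) e^{−λτ} = 0 has negative real part. -/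
/-!
The characteristic function factors as `(λ + r) (λ + β - c e^{-λτ})` with
`c = γK²/(a² + K²) ≥ 0`. The first factor only vanishes at `-r`. For the second, if
`Re λ ≥ 0` then `|λ + β| ≥ Re λ + β ≥ β`, while `|c e^{-λτ}| = c e^{-τ Re λ} ≤ c < β`.
-/

open Complex

theorem Complex.re_neg_of_add_eq_mul_exp_neg_mul {z c : ℂ} {β τ : ℝ} (hc : ‖c‖ < β)
    (hτ : 0 ≤ τ) (h : z + β = c * exp (-z * τ)) : z.re < 0 := by
  by_contra! hz
  have hexp : ‖exp (-z * τ)‖ ≤ 1 := by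
    rw [norm_exp, Real.exp_le_one_iff]
    simpa using mul_nonneg hz hτ
  have : ‖z + β‖ < ‖z + β‖ :=
    calc ‖z + β‖ = ‖c‖ * ‖exp (-z * τ)‖ := by rw [h, norm_mul]
      _ ≤ ‖c‖ := mul_le_of_le_one_right (norm_nonneg c) hexp
      _ < β := hc
      _ ≤ (z + β).re := by simpa using hz
      _ ≤ ‖z + β‖ := re_le_norm _
  exact lt_irrefl _ this

theorem characteristic_roots_at_K_zero_negative_general
    (r K a γ β : ℝ) (hr : 0 < r) (hγ : 0 < γ)
    (hcond : β > γ * K ^ 2 / (a ^ 2 + K ^ 2)) :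
    ∀ τ : ℝ, 0 ≤ τ → ∀ z : ℂ,
      z ^ 2 + ((r : ℂ) + (β : ℂ)) * z -
        ((γ * K ^ 2 / (a ^ 2 + K ^ 2) : ℝ) : ℂ) * z * Complex.exp (-z * (τ : ℂ)) +
        ((r * β : ℝ) : ℂ) -
        ((r * γ * K ^ 2 / (a ^ 2 + K ^ 2) : ℝ) : ℂ) * Complex.exp (-z * (τ : ℂ)) = 0 →
      z.re < 0 := by
  intro τ hτ z hz
  set c : ℝ := γ * K ^ 2 / (a ^ 2 + K ^ 2) with hc
  have hc_nonneg : 0 ≤ c := by positivity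
  have hfactor : (z + r) * (z + β - c * exp (-z * τ)) = 0 := by
    rw [← hz, hc]; push_cast; ring
  rcases mul_eq_zero.1 hfactor with hroot | hroot
  · have : z = -r := eq_neg_of_add_eq_zero_left hroot
    simpa [this] using hr
  · refine re_neg_of_add_eq_mul_exp_neg_mul ?_ hτ (sub_eq_zero.1 hroot)
    rwa [norm_real, Real.norm_of_nonneg hc_nonneg]

/-- For positive `r, K, a, γ, β` with `β > γK²/(a² + K²)`, every
complex root of the characteristic equation
`λ² + (r + β)λ − (γK²/(a² + K²))λe^{−λτ} + rβ − (rγK²/(a² + K²))e^{−λτ} = 0`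
of the linearization at `(K, 0)` has negative real part, for every delay `τ ≥ 0`. -/
theorem characteristic_roots_at_K_zero_negative
    (r K a γ β : ℝ) (hr : 0 < r) (hK : 0 < K) (ha : 0 < a) (hγ : 0 < γ) (hβ : 0 < β)
    (hcond : β > γ * K ^ 2 / (a ^ 2 + K ^ 2)) :
    ∀ τ : ℝ, 0 ≤ τ → ∀ z : ℂ,
      z ^ 2 + ((r : ℂ) + (β : ℂ)) * z -
        ((γ * K ^ 2 / (a ^ 2 + K ^ 2) : ℝ) : ℂ) * z * Complex.exp (-z * (τ : ℂ)) +
        ((r * β : ℝ) : ℂ) -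
        ((r * γ * K ^ 2 / (a ^ 2 + K ^ 2) : ℝ) : ℂ) * Complex.exp (-z * (τ : ℂ)) = 0 →
      z.re < 0 :=
  characteristic_roots_at_K_zero_negative_general r K a γ β hr hγ hcond
end

section
/- Let r, K, a, γ, β, N be positive parameters and let (x*, y*) with x* > 0, y* > 0 satisfy the equilibrium identities γx*y*/(a² + x*²) = r(1 − x*/K) and β = (γx*²/(a² + x*²)) e^{−y*/N}. Define m = r(1 − x*/K)(2a²/(a² + x*²) − 1) + β + r x*/K, n = β(y*/N − 1), p = −β(β − m), and q = −βr(1 − 2x*/K). Assume (H2): (r x*/K + β y*/N)/(r(1 − x*/K)) > 1 − 2a²/(a² + x*²), and (H3): γ x* y* a²/(a² + x*²)² > r(1 − 2x*/K). Then m + n > 0, p + q > 0, p − q > 0, and hence p² − q² > 0. -/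
/-!
Write `R = r(1 - x*/K)` and `ρ = a²/(a² + x*²) > 0`; the first equilibrium identity writes `R` as
`γx*y*/(a² + x*²)`, so `R > 0`, and turns the left side of (H3) into `Rρ`. Since
`R - r x*/K = r(1 - 2x*/K)`, the coefficients become
`m + n = r x*/K + β y*/N - R(1 - 2ρ)`, `p + q = 2β(Rρ - r(1 - 2x*/K))` and `p - q = 2βRρ`:
the first is positive by (H2), the second by (H3), the third trivially, and `p² - q² = (p + q)(p - q)`.
-/

lemma prey_factor_pos_of_equilibrium {r K a γ x y : ℝ} (hγ : 0 < γ) (hx : 0 < x) (hy : 0 < y)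
    (heq : γ * x * y / (a ^ 2 + x ^ 2) = r * (1 - x / K)) : 0 < r * (1 - x / K) :=
  heq ▸ by positivity

lemma predation_term_eq_of_equilibrium {r K a γ x y : ℝ}
    (heq : γ * x * y / (a ^ 2 + x ^ 2) = r * (1 - x / K)) :
    γ * x * y * a ^ 2 / (a ^ 2 + x ^ 2) ^ 2 = r * (1 - x / K) * (a ^ 2 / (a ^ 2 + x ^ 2)) := by
  rw [← heq, div_mul_div_comm, sq (a ^ 2 + x ^ 2)]

theorem coefficients_at_positive_equilibrium_general
    (r K a γ β N xs ys : ℝ) (ha : 0 < a) (hγ : 0 < γ)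
    (hβ : 0 < β) (hxs : 0 < xs) (hys : 0 < ys)
    (heq1 : γ * xs * ys / (a ^ 2 + xs ^ 2) = r * (1 - xs / K))
    (m n p q : ℝ)
    (hm : m = r * (1 - xs / K) * (2 * a ^ 2 / (a ^ 2 + xs ^ 2) - 1) + β + r * xs / K)
    (hn : n = β * (ys / N - 1))
    (hp : p = -β * (β - m))
    (hq : q = -β * r * (1 - 2 * xs / K))
    (hH2 : (r * xs / K + β * ys / N) / (r * (1 - xs / K)) > 1 - 2 * a ^ 2 / (a ^ 2 + xs ^ 2))
    (hH3 : γ * xs * ys * a ^ 2 / (a ^ 2 + xs ^ 2) ^ 2 > r * (1 - 2 * xs / K)) :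
    m + n > 0 ∧ p + q > 0 ∧ p - q > 0 ∧ p ^ 2 - q ^ 2 > 0 := by
  have hR : 0 < r * (1 - xs / K) := prey_factor_pos_of_equilibrium hγ hxs hys heq1
  rw [predation_term_eq_of_equilibrium heq1] at hH3
  rw [gt_iff_lt, lt_div_iff₀ hR] at hH2
  set R := r * (1 - xs / K)
  set ρ := a ^ 2 / (a ^ 2 + xs ^ 2)
  have hρ : 0 < ρ := by positivity
  have hsum : m + n = r * xs / K + β * ys / N - R * (1 - 2 * ρ) := by rw [hm, hn]; ring
  have hplus : p + q = 2 * β * (R * ρ - r * (1 - 2 * xs / K)) := by rw [hp, hq, hm]; ring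
  have hminus : p - q = 2 * β * (R * ρ) := by rw [hp, hq, hm]; ring
  have h₁ : 0 < m + n := by
    rw [hsum, sub_pos]
    linarith [show (1 - 2 * a ^ 2 / (a ^ 2 + xs ^ 2)) * R = R * (1 - 2 * ρ) by ring]
  have h₂ : 0 < p + q := hplus ▸ mul_pos (by positivity) (sub_pos.2 hH3)
  have h₃ : 0 < p - q := hminus ▸ by positivity
  exact ⟨h₁, h₂, h₃, sq_sub_sq p q ▸ mul_pos h₂ h₃⟩

/-- At a positive equilibrium `(x*, y*)` of the delayed predator–prey
system, under hypotheses (H2) and (H3), the coefficients `m, n, p, q` of the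
characteristic equation satisfy `m + n > 0`, `p + q > 0`, `p − q > 0`, and hence
`p² − q² > 0`. -/
theorem coefficients_at_positive_equilibrium
    (r K a γ β N xs ys : ℝ) (hr : 0 < r) (hK : 0 < K) (ha : 0 < a) (hγ : 0 < γ)
    (hβ : 0 < β) (hN : 0 < N) (hxs : 0 < xs) (hys : 0 < ys)
    (heq1 : γ * xs * ys / (a ^ 2 + xs ^ 2) = r * (1 - xs / K))
    (heq2 : β = γ * xs ^ 2 / (a ^ 2 + xs ^ 2) * Real.exp (-ys / N))
    (m n p q : ℝ)
    (hm : m = r * (1 - xs / K) * (2 * a ^ 2 / (a ^ 2 + xs ^ 2) - 1) + β + r * xs / K)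
    (hn : n = β * (ys / N - 1))
    (hp : p = -β * (β - m))
    (hq : q = -β * r * (1 - 2 * xs / K))
    (hH2 : (r * xs / K + β * ys / N) / (r * (1 - xs / K)) > 1 - 2 * a ^ 2 / (a ^ 2 + xs ^ 2))
    (hH3 : γ * xs * ys * a ^ 2 / (a ^ 2 + xs ^ 2) ^ 2 > r * (1 - 2 * xs / K)) :
    m + n > 0 ∧ p + q > 0 ∧ p - q > 0 ∧ p ^ 2 - q ^ 2 > 0 :=
  coefficients_at_positive_equilibrium_general r K a γ β N xs ys ha hγ hβ hxs hys heq1 m n p q hm hn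
    hp hq hH2 hH3
end
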